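/- arXiv:2006.15259 — 3 statements merged into one kernel-verified Lean document; each statement's English description precedes it below -/
import Mathlib

section
/- Choosing two leaves a, b uniformly at random in an n-leaf proper binary tree and partitioning the remaining leaves by relative-distance queries into A (closer to a), B (closer to b), and R (the rest) yields, with probability at least (α-5)/(2α²) for any constant α > 5, a partition in which each of |A∪{a}|, |B∪{b}|, and |R| is at most ((α-1)/α)·n. -/
/-- `x` is an ancestor of `y` (reflexively) in the tree given by the parent map. -/
def Anc {V : Type*} (parent : V → V) (x y : V) : Prop := ∃ k : ℕ, parent^[k] y = x

/-- The parent map describes an arborescence rooted at `r`. -/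
def IsArborescence {V : Type*} (parent : V → V) (r : V) : Prop :=
  parent r = r ∧ ∀ v : V, ∃ k : ℕ, parent^[k] v = r

/-- A leaf is a node with no children. -/
def IsLeaf {V : Type*} (parent : V → V) (v : V) : Prop := ∀ u : V, parent u = v → u = v

/-- `x` is a proper descendant of `y`. -/
def ProperDesc {V : Type*} (parent : V → V) (x y : V) : Prop := Anc parent y x ∧ x ≠ y

/-- `lca` satisfies the defining property of lowest common ancestors. -/
def IsLCA {V : Type*} (parent : V → V) (lca : V → V → V) : Prop :=
  ∀ x y : V, Anc parent (lca x y) x ∧ Anc parent (lca x y) y ∧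
    ∀ w : V, Anc parent w x → Anc parent w y → Anc parent w (lca x y)

/-- `|A ∪ {a}|`: leaves `c` with `lca a c` a proper descendant of `lca a b`, together with `a`. -/
noncomputable def sizeA {V : Type*} (parent : V → V) (lca : V → V → V) (a b : V) : ℕ :=
  Nat.card {c : V | IsLeaf parent c ∧ c ≠ a ∧ c ≠ b ∧ ProperDesc parent (lca a c) (lca a b)} + 1

/-- `|R|`: leaves `c` with `lca a c = lca b c` and `lca a b` a descendant of it. -/
noncomputable def sizeR {V : Type*} (parent : V → V) (lca : V → V → V) (a b : V) : ℕ :=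
  Nat.card {c : V | IsLeaf parent c ∧ c ≠ a ∧ c ≠ b ∧ lca a c = lca b c ∧
    Anc parent (lca a c) (lca a b)}

/-- The pair `(a, b)` yields a good split: each of `|A∪{a}|`, `|B∪{b}|` and `|R|`
is at most `((α-1)/α)·n`, where `n` is the number of leaves. -/
def GoodSplit {V : Type*} [Fintype V] (parent : V → V) (lca : V → V → V) (α : ℝ)
    (a b : V) : Prop :=
  (sizeA parent lca a b : ℝ) ≤ ((α - 1) / α) * (Nat.card {v : V | IsLeaf parent v} : ℝ) ∧
  (sizeA parent lca b a : ℝ) ≤ ((α - 1) / α) * (Nat.card {v : V | IsLeaf parent v} : ℝ) ∧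
  (sizeR parent lca a b : ℝ) ≤ ((α - 1) / α) * (Nat.card {v : V | IsLeaf parent v} : ℝ)

section GSauxSection
open Classical Finset
set_option linter.unusedSectionVars false
namespace GSaux
variable {V : Type*} (parent : V → V)

theorem anc_refl (x : V) : Anc parent x x := ⟨0, rfl⟩
theorem anc_parent (u : V) : Anc parent (parent u) u := ⟨1, rfl⟩
theorem anc_trans {x y z : V} (h1 : Anc parent x y) (h2 : Anc parent y z) :
    Anc parent x z := by
  obtain ⟨k, hk⟩ := h1; obtain ⟨j, hj⟩ := h2
  exact ⟨k + j, by rw [Function.iterate_add_apply, hj, hk]⟩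

theorem anc_antisymm {r : V} (harb : IsArborescence parent r) {x y : V}
    (h1 : Anc parent x y) (h2 : Anc parent y x) : x = y := by
  obtain ⟨k, hk⟩ := h1; obtain ⟨j, hj⟩ := h2
  rcases Nat.eq_zero_or_pos (k + j) with h0 | hpos
  · obtain ⟨hk0, hj0⟩ := Nat.add_eq_zero.mp h0
    subst hk0; subst hj0; simp at hk hj; exact hk.symm
  · have hcyc : parent^[k + j] x = x := by
      rw [Function.iterate_add_apply, hj, hk]
    obtain ⟨m, hm⟩ := harb.2 x
    have hq : ∀ q : ℕ, parent^[q * (k+j)] x = x := by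
      intro q; induction q with
      | zero => simp
      | succ q ih => rw [Nat.succ_mul, Function.iterate_add_apply, hcyc, ih]
    have hr : x = r := by
      have h2 := hq (m+1)
      have hle : m + 1 ≤ (m+1)*(k+j) := Nat.le_mul_of_pos_right _ hpos
      rw [show (m+1) * (k+j) = ((m+1)*(k+j) - m) + m by omega,
        Function.iterate_add_apply, hm, Function.iterate_fixed harb.1] at h2
      exact h2.symm
    subst hr
    rw [Function.iterate_fixed harb.1] at hj
    rw [← hj, Function.iterate_fixed harb.1] at hk
    rw [← hj, hk]

theorem anc_total {x y v : V} (h1 : Anc parent x v) (h2 : Anc parent y v) :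
    Anc parent x y ∨ Anc parent y x := by
  obtain ⟨k, hk⟩ := h1; obtain ⟨j, hj⟩ := h2
  rcases le_total k j with h | h
  · right
    exact ⟨j - k, by rw [← hk, ← Function.iterate_add_apply, Nat.sub_add_cancel h, hj]⟩
  · left
    exact ⟨k - j, by rw [← hj, ← Function.iterate_add_apply, Nat.sub_add_cancel h, hk]⟩

theorem exists_child {x y : V} (h : Anc parent x y) (hne : x ≠ y) :
    ∃ d : V, parent d = x ∧ d ≠ x ∧ Anc parent d y := by
  classical
  have hex : ∃ k, parent^[k] y = x := h
  let k := Nat.find hex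
  have hk : parent^[k] y = x := Nat.find_spec hex
  have hkpos : 0 < k := by
    rcases Nat.eq_zero_or_pos k with h0 | h0
    · exfalso; apply hne; rw [← hk, h0]; rfl
    · exact h0
  refine ⟨parent^[k-1] y, ?_, ?_, ⟨k-1, rfl⟩⟩
  · have h1 : parent^[(k-1)+1] y = parent (parent^[k-1] y) :=
      Function.iterate_succ_apply' parent (k-1) y
    rw [← h1, Nat.sub_add_cancel hkpos, hk]
  · intro heq
    exact Nat.find_min hex (show k - 1 < k by omega) heq


variable [Fintype V]

theorem natCard_eq (p : V → Prop) :
    Nat.card {x : V | p x} = (univ.filter p).card := by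
  rw [Nat.card_eq_fintype_card]
  convert Fintype.card_subtype p
  exact Iff.rfl

noncomputable def childF (v : V) : Finset V := univ.filter (fun u => parent u = v ∧ u ≠ v)

theorem mem_childF {v d : V} : d ∈ childF parent v ↔ parent d = v ∧ d ≠ v := by
  simp [childF]

theorem card_childF (v : V) :
    (childF parent v).card = Nat.card {u : V | parent u = v ∧ u ≠ v} := by
  rw [natCard_eq]
  congr 1
  unfold childF
  congr 1

noncomputable def leavesUnder (v : V) : Finset V :=
  univ.filter (fun c => IsLeaf parent c ∧ Anc parent v c)

noncomputable def sz (v : V) : ℕ := (leavesUnder parent v).card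

noncomputable def leafF : Finset V := univ.filter (fun c => IsLeaf parent c)

theorem mem_leavesUnder {v c : V} :
    c ∈ leavesUnder parent v ↔ IsLeaf parent c ∧ Anc parent v c := by
  simp [leavesUnder]

theorem leavesUnder_mono {x y : V} (h : Anc parent x y) :
    leavesUnder parent y ⊆ leavesUnder parent x := by
  intro c hc
  rw [mem_leavesUnder] at *
  exact ⟨hc.1, anc_trans parent h hc.2⟩

theorem sz_mono {x y : V} (h : Anc parent x y) : sz parent y ≤ sz parent x :=
  card_le_card (leavesUnder_mono parent h)

theorem leavesUnder_subset_leafF (v : V) : leavesUnder parent v ⊆ leafF parent := by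
  intro c hc; rw [mem_leavesUnder] at hc; simp [leafF, hc.1]

theorem leaf_of_no_child {v : V}
    (h : Nat.card {u : V | parent u = v ∧ u ≠ v} = 0) : IsLeaf parent v := by
  intro u hu
  by_contra hne
  rw [← card_childF, card_eq_zero] at h
  have : u ∈ childF parent v := (mem_childF parent).mpr ⟨hu, hne⟩
  rw [h] at this; simp at this

theorem not_anc_sibling {r : V} (harb : IsArborescence parent r) {v u1 u2 : V}
    (h1 : parent u1 = v) (h1n : u1 ≠ v) (h2 : parent u2 = v)
    (hne : u1 ≠ u2) : ¬ Anc parent u1 u2 := by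
  rintro ⟨k, hk⟩
  rcases Nat.eq_zero_or_pos k with h0 | hpos
  · rw [h0] at hk; exact hne hk.symm
  · apply h1n
    apply anc_antisymm parent harb _ (⟨1, h1⟩ : Anc parent v u1)
    refine ⟨k - 1, ?_⟩
    have : parent^[k-1] (parent u2) = parent^[k] u2 := by
      rw [← Function.iterate_succ_apply, Nat.succ_eq_add_one, Nat.sub_add_cancel hpos]
    rw [← hk, ← this, h2]

theorem leavesUnder_leaf {v : V} (h : IsLeaf parent v) : leavesUnder parent v = {v} := by
  ext c
  rw [mem_leavesUnder, mem_singleton]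
  constructor
  · rintro ⟨hc, hanc⟩
    by_contra hne
    obtain ⟨d, hd, hdn, -⟩ := exists_child parent hanc (Ne.symm hne)
    exact hdn (h d hd)
  · rintro rfl; exact ⟨h, anc_refl parent _⟩

theorem sz_leaf {v : V} (h : IsLeaf parent v) : sz parent v = 1 := by
  rw [sz, leavesUnder_leaf parent h, card_singleton]

-- structure of a non-leaf node, given hbin
theorem children_structure {r : V} (harb : IsArborescence parent r)
    (hbin : ∀ v : V, Nat.card {u : V | parent u = v ∧ u ≠ v} = 0 ∨
      Nat.card {u : V | parent u = v ∧ u ≠ v} = 2)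
    {v : V} (hv : ¬ IsLeaf parent v) :
    ∃ u1 u2 : V, u1 ≠ u2 ∧ parent u1 = v ∧ u1 ≠ v ∧ parent u2 = v ∧ u2 ≠ v ∧
      (∀ d : V, parent d = v → d ≠ v → d = u1 ∨ d = u2) ∧
      leavesUnder parent v = leavesUnder parent u1 ∪ leavesUnder parent u2 ∧
      Disjoint (leavesUnder parent u1) (leavesUnder parent u2) ∧
      sz parent v = sz parent u1 + sz parent u2 := by
  rcases hbin v with h0 | h2
  · exact absurd (leaf_of_no_child parent h0) hv
  · rw [← card_childF, card_eq_two] at h2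
    obtain ⟨u1, u2, hne, hset⟩ := h2
    have hmem : ∀ d : V, (parent d = v ∧ d ≠ v) ↔ (d = u1 ∨ d = u2) := by
      intro d
      constructor
      · intro hd
        have : d ∈ childF parent v := (mem_childF parent).mpr hd
        rw [hset] at this; simpa using this
      · intro hd
        have : d ∈ ({u1, u2} : Finset V) := by simpa using hd
        rw [← hset] at this
        exact (mem_childF parent).mp this
    have hu1 := (hmem u1).mpr (Or.inl rfl)
    have hu2 := (hmem u2).mpr (Or.inr rfl)
    have hdisj : Disjoint (leavesUnder parent u1) (leavesUnder parent u2) := by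
      rw [disjoint_left]
      intro c hc1 hc2
      rw [mem_leavesUnder] at hc1 hc2
      rcases anc_total parent hc1.2 hc2.2 with h | h
      · exact not_anc_sibling parent harb hu1.1 hu1.2 hu2.1 hne h
      · exact not_anc_sibling parent harb hu2.1 hu2.2 hu1.1 hne.symm h
    have hunion : leavesUnder parent v = leavesUnder parent u1 ∪ leavesUnder parent u2 := by
      apply Finset.Subset.antisymm
      · intro c hc
        rw [mem_leavesUnder] at hc
        have hcv : c ≠ v := by rintro rfl; exact hv hc.1
        obtain ⟨d, hd, hdn, hdc⟩ := exists_child parent hc.2 (Ne.symm hcv)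
        rcases (hmem d).mp ⟨hd, hdn⟩ with rfl | rfl
        · exact mem_union_left _ ((mem_leavesUnder parent).mpr ⟨hc.1, hdc⟩)
        · exact mem_union_right _ ((mem_leavesUnder parent).mpr ⟨hc.1, hdc⟩)
      · apply union_subset <;>
          [exact leavesUnder_mono parent ⟨1, hu1.1⟩;
           exact leavesUnder_mono parent ⟨1, hu2.1⟩]
    refine ⟨u1, u2, hne, hu1.1, hu1.2, hu2.1, hu2.2,
      fun d hd hdn => (hmem d).mp ⟨hd, hdn⟩, hunion, hdisj, ?_⟩
    rw [sz, sz, sz, hunion, card_union_of_disjoint hdisj]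


noncomputable def descSet (v : V) : Finset V := univ.filter (fun x => Anc parent v x)

theorem descSet_child_ssubset {r : V} (harb : IsArborescence parent r) {v d : V}
    (hd : parent d = v) (hdn : d ≠ v) : descSet parent d ⊂ descSet parent v := by
  constructor
  · intro x hx
    simp only [descSet, mem_filter, mem_univ, true_and] at *
    exact anc_trans parent ⟨1, hd⟩ hx
  · intro hsub
    have : v ∈ descSet parent d := hsub (by simp [descSet, anc_refl])
    simp only [descSet, mem_filter, mem_univ, true_and] at this
    exact hdn (anc_antisymm parent harb this ⟨1, hd⟩)

theorem sz_pos {r : V} (harb : IsArborescence parent r)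
    (hbin : ∀ v : V, Nat.card {u : V | parent u = v ∧ u ≠ v} = 0 ∨
      Nat.card {u : V | parent u = v ∧ u ≠ v} = 2) (v : V) : 1 ≤ sz parent v := by
  suffices h : ∀ N : ℕ, ∀ v : V, (descSet parent v).card ≤ N → 1 ≤ sz parent v from
    h _ v le_rfl
  intro N
  induction N with
  | zero =>
    intro v hv
    have : 0 < (descSet parent v).card := card_pos.mpr ⟨v, by simp [descSet, anc_refl]⟩
    omega
  | succ N ih =>
    intro v hv
    by_cases hleaf : IsLeaf parent v
    · rw [sz_leaf parent hleaf]
    · obtain ⟨u1, u2, -, h1, h1n, -, -, -, -, -, hsum⟩ :=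
        children_structure parent harb hbin hleaf
      have hlt := card_lt_card (descSet_child_ssubset parent harb h1 h1n)
      have := ih u1 (by omega)
      omega

theorem descent {r : V} (harb : IsArborescence parent r) (T : ℝ) :
    ∀ N : ℕ, ∀ v : V, (descSet parent v).card ≤ N → T < sz parent v →
    ∃ u : V, Anc parent v u ∧ T < (sz parent u : ℝ) ∧
      ∀ d : V, parent d = u → d ≠ u → (sz parent d : ℝ) ≤ T := by
  intro N
  induction N with
  | zero =>
    intro v hv hT
    have : 0 < (descSet parent v).card := card_pos.mpr ⟨v, by simp [descSet, anc_refl]⟩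
    omega
  | succ N ih =>
    intro v hv hT
    by_cases hch : ∀ d : V, parent d = v → d ≠ v → (sz parent d : ℝ) ≤ T
    · exact ⟨v, anc_refl parent v, hT, hch⟩
    · push_neg at hch
      obtain ⟨d, hd, hdn, hdT⟩ := hch
      have hlt := card_lt_card (descSet_child_ssubset parent harb hd hdn)
      obtain ⟨u, hu1, hu2, hu3⟩ := ih d (by omega) hdT
      exact ⟨u, anc_trans parent ⟨1, hd⟩ hu1, hu2, hu3⟩

theorem leavesUnder_root {r : V} (harb : IsArborescence parent r) :
    leavesUnder parent r = leafF parent := by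
  ext c
  simp only [leavesUnder, leafF, mem_filter, mem_univ, true_and, and_iff_left_iff_imp]
  exact fun _ => harb.2 c


-- bridging for arbitrary fintypes
theorem natCard_eq' {W : Type*} [Fintype W] (p : W → Prop) :
    Nat.card {x : W | p x} = (univ.filter p).card := by
  rw [Nat.card_eq_fintype_card]
  convert Fintype.card_subtype p
  exact Iff.rfl

theorem natCard_le {W : Type*} [Fintype W] {p : W → Prop} {F : Finset W}
    (h : ∀ x, p x → x ∈ F) : Nat.card {x : W | p x} ≤ F.card := by
  rw [natCard_eq']
  apply card_le_card
  intro x hx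
  simp only [mem_filter, mem_univ, true_and] at hx
  exact h x hx

theorem card_leafF : Nat.card {v : V | IsLeaf parent v} = (leafF parent).card :=
  natCard_eq _

variable {lca : V → V → V}

theorem lca_anc1 (hlca : IsLCA parent lca) (a b : V) : Anc parent (lca a b) a :=
  (hlca a b).1
theorem lca_anc2 (hlca : IsLCA parent lca) (a b : V) : Anc parent (lca a b) b :=
  (hlca a b).2.1

theorem lca_comm {r : V} (harb : IsArborescence parent r) (hlca : IsLCA parent lca)
    (a b : V) : lca a b = lca b a :=
  anc_antisymm parent harb
    ((hlca b a).2.2 _ (hlca a b).2.1 (hlca a b).1)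
    ((hlca a b).2.2 _ (hlca b a).2.1 (hlca b a).1)

theorem lca_ne_left {r : V} (harb : IsArborescence parent r) (hlca : IsLCA parent lca)
    {a b : V} (la : IsLeaf parent a) (hne : a ≠ b) : lca a b ≠ a := by
  intro h
  have hab : Anc parent a b := h ▸ (hlca a b).2.1
  obtain ⟨d, hd, hdn, -⟩ := exists_child parent hab hne
  exact hdn (la d hd)

theorem sizeA_le {r : V} (harb : IsArborescence parent r) (hlca : IsLCA parent lca)
    {a b : V} (la : IsLeaf parent a) (hne : a ≠ b) :
    ∃ d : V, parent d = lca a b ∧ d ≠ lca a b ∧ Anc parent d a ∧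
      sizeA parent lca a b ≤ sz parent d := by
  set l := lca a b with hl
  obtain ⟨d, hd, hdn, hda⟩ :=
    exists_child parent (lca_anc1 parent hlca a b) (lca_ne_left parent harb hlca la hne)
  refine ⟨d, hd, hdn, hda, ?_⟩
  have h1 : Nat.card {c : V | IsLeaf parent c ∧ c ≠ a ∧ c ≠ b ∧
      ProperDesc parent (lca a c) (lca a b)} ≤ ((leavesUnder parent d).erase a).card := by
    apply natCard_le
    intro c hc
    obtain ⟨hcl, hca, hcb, hanc_lw, hwne⟩ := hc
    rw [mem_erase, mem_leavesUnder]
    refine ⟨hca, hcl, ?_⟩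
    have hwa : Anc parent (lca a c) a := lca_anc1 parent hlca a c
    have hwc : Anc parent (lca a c) c := lca_anc2 parent hlca a c
    rcases anc_total parent hwa hda with hwd | hdw
    · obtain ⟨k, hk⟩ := hwd
      rcases Nat.eq_zero_or_pos k with h0 | hpos
      · rw [h0] at hk; rw [← hk] at hwc; exact hwc
      · exfalso
        apply hwne
        apply anc_antisymm parent harb _ hanc_lw
        refine ⟨k - 1, ?_⟩
        have : parent^[k-1] (parent d) = parent^[k] d := by
          rw [← Function.iterate_succ_apply, Nat.succ_eq_add_one, Nat.sub_add_cancel hpos]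
        rw [← hk, ← this, hd]
    · exact anc_trans parent hdw hwc
  have hac : a ∈ leavesUnder parent d := (mem_leavesUnder parent).mpr ⟨la, hda⟩
  have h2 := card_erase_of_mem hac
  have h3 : 1 ≤ (leavesUnder parent d).card := card_pos.mpr ⟨a, hac⟩
  unfold sizeA sz
  omega

theorem sizeR_le {r : V} (harb : IsArborescence parent r)
    (hbin : ∀ v : V, Nat.card {u : V | parent u = v ∧ u ≠ v} = 0 ∨
      Nat.card {u : V | parent u = v ∧ u ≠ v} = 2)
    (hlca : IsLCA parent lca)
    {a b : V} (la : IsLeaf parent a) (lb : IsLeaf parent b) (hne : a ≠ b) :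
    sizeR parent lca a b + sz parent (lca a b) ≤ (leafF parent).card := by
  set l := lca a b with hl
  obtain ⟨da, hda, hdan, hdaa⟩ :=
    exists_child parent (lca_anc1 parent hlca a b) (lca_ne_left parent harb hlca la hne)
  have hlbn : lca a b ≠ b := by
    rw [lca_comm parent harb hlca a b]
    exact lca_ne_left parent harb hlca lb (Ne.symm hne)
  obtain ⟨db, hdb, hdbn, hdbb⟩ :=
    exists_child parent (lca_anc2 parent hlca a b) hlbn
  have hdadb : da ≠ db := by
    rintro rfl
    exact hdan (anc_antisymm parent harb
      ((hlca a b).2.2 da hdaa hdbb) ⟨1, hda⟩)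
  have hlnotleaf : ¬ IsLeaf parent l := fun h => hdan (h da hda)
  obtain ⟨u1, u2, hu12, h1, h1n, h2, h2n, hcov, -, -, -⟩ :=
    children_structure parent harb hbin hlnotleaf
  have hchild : ∀ d : V, parent d = l → d ≠ l → d = da ∨ d = db := by
    intro d hd hdn'
    have hda' := hcov da hda hdan
    have hdb' := hcov db hdb hdbn
    rcases hda' with h | h <;> rcases hdb' with h' | h' <;>
      rcases hcov d hd hdn' with rfl | rfl <;> simp_all
  -- the R set avoids leavesUnder l
  have h1' : Nat.card {c : V | IsLeaf parent c ∧ c ≠ a ∧ c ≠ b ∧ lca a c = lca b c ∧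
      Anc parent (lca a c) (lca a b)} ≤ (leafF parent \ leavesUnder parent l).card := by
    apply natCard_le
    intro c hc
    obtain ⟨hcl, hca, hcb, hw, hwanc⟩ := hc
    rw [mem_sdiff, mem_leavesUnder]
    refine ⟨by simp [leafF, hcl], ?_⟩
    rintro ⟨-, hanc_lc⟩
    have hcnl : l ≠ c := by rintro rfl; exact hlnotleaf hcl
    obtain ⟨dc, hdc, hdcn, hdcc⟩ := exists_child parent hanc_lc hcnl
    rcases hchild dc hdc hdcn with rfl | rfl
    · apply hdan
      apply anc_antisymm parent harb _ ⟨1, hda⟩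
      exact anc_trans parent ((hlca a c).2.2 dc hdaa hdcc) hwanc
    · apply hdbn
      apply anc_antisymm parent harb _ ⟨1, hdb⟩
      refine anc_trans parent ((hlca b c).2.2 dc hdbb hdcc) ?_
      rw [← hw]; exact hwanc
  have h2' := card_sdiff_of_subset (leavesUnder_subset_leafF parent l)
  have h3' := card_le_card (leavesUnder_subset_leafF parent l)
  unfold sizeR sz
  omega

theorem goodsplit_main {r : V} (harb : IsArborescence parent r)
    (hbin : ∀ v : V, Nat.card {u : V | parent u = v ∧ u ≠ v} = 0 ∨
      Nat.card {u : V | parent u = v ∧ u ≠ v} = 2)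
    (hlca : IsLCA parent lca) {α : ℝ} (hα : 5 < α)
    {h u : V} (hhu : Anc parent h u)
    (hh : (sz parent h : ℝ) ≤ (α-1)/α * ((leafF parent).card : ℝ))
    (hu : ((leafF parent).card : ℝ)/α < (sz parent u : ℝ))
    {a b : V} (ha : a ∈ leavesUnder parent u) (hb : b ∈ leavesUnder parent h)
    (hbu : b ∉ leavesUnder parent u) :
    a ≠ b ∧ GoodSplit parent lca α a b ∧ GoodSplit parent lca α b a := by
  rw [mem_leavesUnder] at ha hb
  obtain ⟨la, hua⟩ := ha
  obtain ⟨lb, hhb⟩ := hb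
  have hnub : ¬ Anc parent u b := fun hh' => hbu ((mem_leavesUnder parent).mpr ⟨lb, hh'⟩)
  have hne : a ≠ b := by rintro rfl; exact hnub hua
  have hα0 : (0:ℝ) < α := by linarith
  set l := lca a b with hldef
  have hla : Anc parent l a := lca_anc1 parent hlca a b
  have hlb : Anc parent l b := lca_anc2 parent hlca a b
  have hlu : Anc parent l u := by
    rcases anc_total parent hua hla with h1 | h1
    · exact absurd (anc_trans parent h1 hlb) hnub
    · exact h1
  have hhl : Anc parent h l :=
    (hlca a b).2.2 h (anc_trans parent hhu hua) hhb
  have hszl : sz parent u ≤ sz parent l := sz_mono parent hlu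
  have hcomm : lca b a = l := (lca_comm parent harb hlca a b).symm
  -- sizeA a b
  obtain ⟨d1, hd1, -, -, hA1⟩ := sizeA_le parent harb hlca la hne
  have hszd1 : sz parent d1 ≤ sz parent h :=
    sz_mono parent (anc_trans parent hhl ⟨1, hd1⟩)
  -- sizeA b a
  obtain ⟨d2, hd2, -, -, hA2⟩ := sizeA_le parent harb hlca lb (Ne.symm hne)
  rw [hcomm] at hd2
  have hszd2 : sz parent d2 ≤ sz parent h :=
    sz_mono parent (anc_trans parent hhl ⟨1, hd2⟩)
  -- sizeR
  have hR1 := sizeR_le parent harb hbin hlca la lb hne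
  have hR2 := sizeR_le parent harb hbin hlca lb la (Ne.symm hne)
  rw [hcomm] at hR2
  set n := (leafF parent).card with hndef
  have hRbound : ∀ m : ℕ, m + sz parent l ≤ n → (m:ℝ) ≤ (α-1)/α * n := by
    intro m hm
    have h1 : (m:ℝ) ≤ (n:ℝ) - (sz parent l : ℝ) := by
      have := (Nat.cast_le (α := ℝ)).mpr hm
      push_cast at this; linarith
    have h2 : (n:ℝ)/α ≤ (sz parent l : ℝ) := by
      have := (Nat.cast_le (α := ℝ)).mpr hszl
      linarith
    have h3 : (α-1)/α * (n:ℝ) = n - n/α := by field_simp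
    linarith
  have hAbound : ∀ m : ℕ, m ≤ sz parent h → (m:ℝ) ≤ (α-1)/α * n := by
    intro m hm
    have := (Nat.cast_le (α := ℝ)).mpr hm
    linarith
  rw [GoodSplit, GoodSplit, card_leafF, ← hndef]
  exact ⟨hne,
    ⟨hAbound _ (le_trans hA1 hszd1), hAbound _ (le_trans hA2 hszd2), hRbound _ hR1⟩,
    ⟨hAbound _ (le_trans hA2 hszd2), hAbound _ (le_trans hA1 hszd1), hRbound _ hR2⟩⟩


theorem natCard_ge {W : Type*} [Fintype W] {p : W → Prop} {F : Finset W}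
    (h : ∀ x ∈ F, p x) : F.card ≤ Nat.card {x : W | p x} := by
  rw [natCard_eq']
  exact card_le_card (fun x hx => mem_filter.mpr ⟨mem_univ x, h x hx⟩)

theorem natCard_mono {W : Type*} [Fintype W] {p q : W → Prop} (h : ∀ x, p x → q x) :
    Nat.card {x : W | p x} ≤ Nat.card {x : W | q x} := by
  rw [natCard_eq', natCard_eq']
  apply card_le_card
  intro x hx
  simp only [mem_filter, mem_univ, true_and] at *
  exact h x hx

theorem goodsplit_two {α : ℝ} (hα : 5 < α) (hn2 : (leafF parent).card = 2)
    {a b : V} (la : IsLeaf parent a) (lb : IsLeaf parent b) (hne : a ≠ b) :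
    GoodSplit parent lca α a b := by
  have hα0 : (0:ℝ) < α := by linarith
  have hkey : ∀ (x y : V), x ≠ y → IsLeaf parent x → IsLeaf parent y →
      ∀ e : V → Prop, Nat.card {c : V | IsLeaf parent c ∧ c ≠ x ∧ c ≠ y ∧ e c} = 0 := by
    intro x y hxy lx ly e
    have hle : Nat.card {c : V | IsLeaf parent c ∧ c ≠ x ∧ c ≠ y ∧ e c} ≤
        (leafF parent \ {x, y}).card := by
      apply natCard_le
      intro c hc
      rw [mem_sdiff]
      constructor
      · simp [leafF, hc.1]
      · simp [hc.2.1, hc.2.2.1]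
    have hsub : ({x, y} : Finset V) ⊆ leafF parent := by
      intro c hc
      simp only [mem_insert, mem_singleton] at hc
      rcases hc with rfl | rfl <;> simp [leafF, lx, ly]
    have hc2 : ({x, y} : Finset V).card = 2 := card_pair hxy
    have := card_sdiff_of_subset hsub
    omega
  have hb2 : (1:ℝ) ≤ (α - 1)/α * 2 := by
    rw [div_mul_eq_mul_div, le_div_iff₀ hα0]
    linarith
  rw [GoodSplit, card_leafF, hn2]
  refine ⟨?_, ?_, ?_⟩
  · rw [sizeA, hkey a b hne la lb _]
    push_cast
    linarith
  · rw [sizeA, hkey b a (Ne.symm hne) lb la _]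
    push_cast
    linarith
  · rw [sizeR, hkey a b hne la lb _]
    push_cast
    linarith

theorem arith {α : ℝ} {n B M S : ℕ} (hα : 5 < α) (hn : 3 ≤ n)
    (hB1 : (n:ℝ)/α < (B:ℝ)) (hB2 : (B:ℝ) ≤ max 1 (2*(n:ℝ)/α))
    (hS1 : (α-1)/(2*α) * (n:ℝ) < (S:ℝ)) (hBM : B + M = S) :
    (α-5)/(2*α^2) * (n:ℝ)^2 ≤ 2 * (B:ℝ) * (M:ℝ) := by
  have hα0 : (0:ℝ) < α := by linarith
  have hn3 : (3:ℝ) ≤ (n:ℝ) := by exact_mod_cast hn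
  have hM : (M:ℝ) = (S:ℝ) - (B:ℝ) := by
    have : (B:ℝ) + (M:ℝ) = (S:ℝ) := by exact_mod_cast hBM
    linarith
  rcases le_or_gt (2*(n:ℝ)/α) 1 with hc | hc
  · -- 2n ≤ α, so B = 1
    have h2n : 2*(n:ℝ) ≤ α := by
      rw [div_le_one hα0] at hc; exact hc
    have hB1' : (B:ℝ) ≤ 1 := le_trans hB2 (by simp [hc])
    have hBpos : 1 ≤ B := by
      by_contra hcon
      push_neg at hcon
      interval_cases B
      simp at hB1
      have : (0:ℝ) < (n:ℝ)/α := div_pos (by linarith) hα0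
      linarith
    have hBeq : (B:ℝ) = 1 := le_antisymm hB1' (by exact_mod_cast hBpos)
    have hna : (n:ℝ)/α ≤ 1/2 := by
      rw [div_le_iff₀ hα0]; linarith
    have h2S : (n:ℝ) ≤ 2*(S:ℝ) := by
      by_contra hcon
      push_neg at hcon
      have h1 : 2*S + 1 ≤ n := by exact_mod_cast hcon
      have h2 : 2*(S:ℝ) + 1 ≤ (n:ℝ) := by exact_mod_cast h1
      have h3 : (α-1)/(2*α) * (n:ℝ) = (n:ℝ)/2 - (n:ℝ)/α/2 := by field_simp
      linarith
    rw [hBeq, hM, hBeq]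
    -- goal : (α-5)/(2α²) n² ≤ 2(S-1)
    have hfrac : (α-5)/(2*α^2) * (n:ℝ)^2 ≤ (n:ℝ)/4 := by
      rw [div_mul_eq_mul_div, div_le_div_iff₀ (by positivity) (by norm_num)]
      nlinarith [mul_le_mul_of_nonneg_right h2n
        (show (0:ℝ) ≤ α * (n:ℝ) by positivity), sq_nonneg (n:ℝ)]
    nlinarith
  · -- B ≤ 2n/α, M > (α-5)/(2α) n
    have hB2' : (B:ℝ) ≤ 2*(n:ℝ)/α := le_trans hB2 (by simp [le_of_lt hc])
    have hMlb : (α-5)/(2*α) * (n:ℝ) < (M:ℝ) := by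
      have : (α-5)/(2*α) * (n:ℝ) = (α-1)/(2*α) * (n:ℝ) - 2*(n:ℝ)/α := by
        field_simp; ring
      rw [this, hM]
      linarith
    have hnn : (0:ℝ) ≤ (n:ℝ)/α := by positivity
    have hMn : (0:ℝ) ≤ (α-5)/(2*α) * (n:ℝ) :=
      mul_nonneg (div_nonneg (by linarith) (by linarith)) (Nat.cast_nonneg n)
    have key : ((n:ℝ)/α) * ((α-5)/(2*α) * (n:ℝ)) ≤ (B:ℝ) * (M:ℝ) :=
      mul_le_mul hB1.le hMlb.le hMn (by linarith)
    have heq : (α-5)/(2*α^2) * (n:ℝ)^2 = ((n:ℝ)/α) * ((α-5)/(2*α) * (n:ℝ)) := by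
      field_simp
    have hBMnn : (0:ℝ) ≤ (B:ℝ) * (M:ℝ) := by positivity
    linarith

end GSaux


end GSauxSection

/-- Choosing two distinct leaves `a, b` uniformly at random in an `n`-leaf proper binary
tree yields, with probability at least `(α-5)/(2α²)` for any `α > 5`, a partition into
`A∪{a}`, `B∪{b}`, `R` in which each part has size at most `((α-1)/α)·n`. -/
theorem good_split_probability {V : Type*} [Fintype V]
    (parent : V → V) (r : V) (lca : V → V → V) (α : ℝ)
    (harb : IsArborescence parent r)
    -- proper binary: every node has zero or exactly two children
    (hbin : ∀ v : V, Nat.card {u : V | parent u = v ∧ u ≠ v} = 0 ∨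
      Nat.card {u : V | parent u = v ∧ u ≠ v} = 2)
    (hlca : IsLCA parent lca)
    (hα : 5 < α)
    (hn : 2 ≤ Nat.card {v : V | IsLeaf parent v}) :
    (α - 5) / (2 * α ^ 2) ≤
      (Nat.card {ab : V × V | IsLeaf parent ab.1 ∧ IsLeaf parent ab.2 ∧ ab.1 ≠ ab.2 ∧
          GoodSplit parent lca α ab.1 ab.2} : ℝ) /
        (Nat.card {ab : V × V | IsLeaf parent ab.1 ∧ IsLeaf parent ab.2 ∧ ab.1 ≠ ab.2} : ℝ) := by
  classical
  have hα0 : (0:ℝ) < α := by linarith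
  have hcl := GSaux.card_leafF parent
  set NUM := Nat.card {ab : V × V | IsLeaf parent ab.1 ∧ IsLeaf parent ab.2 ∧ ab.1 ≠ ab.2 ∧
      GoodSplit parent lca α ab.1 ab.2} with hNUM
  set DEN := Nat.card {ab : V × V | IsLeaf parent ab.1 ∧ IsLeaf parent ab.2 ∧ ab.1 ≠ ab.2}
    with hDEN
  set n := (GSaux.leafF parent).card with hndef
  have hn' : 2 ≤ n := hcl ▸ hn
  -- two distinct leaves
  obtain ⟨a0, ha0, b0, hb0, hab0⟩ :=
    Finset.one_lt_card.mp (show 1 < (GSaux.leafF parent).card by omega)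
  have ha0l : IsLeaf parent a0 := by simpa [GSaux.leafF] using ha0
  have hb0l : IsLeaf parent b0 := by simpa [GSaux.leafF] using hb0
  have hden1 : 1 ≤ DEN := by
    rw [hDEN]
    have := GSaux.natCard_ge (F := ({(a0, b0)} : Finset (V × V)))
      (p := fun ab : V × V => IsLeaf parent ab.1 ∧ IsLeaf parent ab.2 ∧ ab.1 ≠ ab.2)
      (by rintro ⟨x, y⟩ hx
          rw [Finset.mem_singleton, Prod.mk.injEq] at hx
          obtain ⟨rfl, rfl⟩ := hx
          exact ⟨ha0l, hb0l, hab0⟩)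
    simpa using this
  have hdenle : DEN ≤ n * n := by
    rw [hDEN]
    have := GSaux.natCard_le (F := GSaux.leafF parent ×ˢ GSaux.leafF parent)
      (p := fun ab : V × V => IsLeaf parent ab.1 ∧ IsLeaf parent ab.2 ∧ ab.1 ≠ ab.2)
      (by rintro ⟨x, y⟩ ⟨hx, hy, -⟩
          rw [Finset.mem_product]
          exact ⟨by simp [GSaux.leafF, hx], by simp [GSaux.leafF, hy]⟩)
    simpa [Finset.card_product] using this
  have hdpos : (0:ℝ) < (DEN : ℝ) := by exact_mod_cast hden1
  rw [le_div_iff₀ hdpos]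
  rcases eq_or_lt_of_le hn' with hn2 | hn3
  · -- n = 2 : every pair is good
    have hmono : DEN ≤ NUM := by
      rw [hDEN, hNUM]
      apply GSaux.natCard_mono
      rintro ⟨x, y⟩ ⟨hx, hy, hxy⟩
      exact ⟨hx, hy, hxy, GSaux.goodsplit_two parent hα (by omega) hx hy hxy⟩
    have ht1 : (α - 5) / (2 * α ^ 2) ≤ 1 := by
      rw [div_le_one (by positivity)]
      nlinarith
    have hc : (DEN : ℝ) ≤ (NUM : ℝ) := by exact_mod_cast hmono
    nlinarith
  · have hn3' : 3 ≤ n := hn3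
    have hnr : (3:ℝ) ≤ (n:ℝ) := by exact_mod_cast hn3'
    have hszr : GSaux.sz parent r = n := by
      rw [GSaux.sz, GSaux.leavesUnder_root parent harb]
    have hT1r : ((α-1)/α) * (n:ℝ) < GSaux.sz parent r := by
      rw [hszr]
      have h1 : (α-1)/α < 1 := by rw [div_lt_one hα0]; linarith
      nlinarith
    obtain ⟨w, hrw, hwT, hwch⟩ :=
      GSaux.descent parent harb ((α-1)/α * (n:ℝ)) _ r le_rfl hT1r
    have hwle : ¬ IsLeaf parent w := by
      intro hleaf
      rw [GSaux.sz_leaf parent hleaf] at hwT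
      have h45 : (4:ℝ)/5 ≤ (α-1)/α := by
        rw [div_le_div_iff₀ (by norm_num) hα0]; linarith
      push_cast at hwT
      nlinarith
    obtain ⟨u1, u2, -, hp1, hq1, hp2, hq2, -, -, -, hsum⟩ :=
      GSaux.children_structure parent harb hbin hwle
    obtain ⟨h, hph, hphn, hh2⟩ : ∃ h, parent h = w ∧ h ≠ w ∧
        GSaux.sz parent w ≤ 2 * GSaux.sz parent h := by
      rcases le_total (GSaux.sz parent u1) (GSaux.sz parent u2) with hcmp | hcmp
      · exact ⟨u2, hp2, hq2, by omega⟩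
      · exact ⟨u1, hp1, hq1, by omega⟩
    have hhle : (GSaux.sz parent h : ℝ) ≤ (α-1)/α * n := hwch h hph hphn
    have hS1 : (α-1)/(2*α) * (n:ℝ) < GSaux.sz parent h := by
      have hc : (GSaux.sz parent w : ℝ) ≤ 2 * GSaux.sz parent h := by exact_mod_cast hh2
      have he : (α-1)/(2*α) * (n:ℝ) = ((α-1)/α * (n:ℝ))/2 := by
        rw [div_mul_eq_mul_div, div_mul_eq_mul_div, div_div]
        ring_nf
      linarith
    have hT2h : (n:ℝ)/α < GSaux.sz parent h := by
      have he : (α-1)/(2*α) * (n:ℝ) - (n:ℝ)/α = (α-3)/(2*α) * (n:ℝ) := by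
        field_simp; ring
      have hge : (0:ℝ) ≤ (α-3)/(2*α) * (n:ℝ) :=
        mul_nonneg (div_nonneg (by linarith) (by linarith)) (Nat.cast_nonneg n)
      linarith
    obtain ⟨u, hhu, huT, huch⟩ :=
      GSaux.descent parent harb ((n:ℝ)/α) _ h le_rfl hT2h
    have hszu : (GSaux.sz parent u : ℝ) ≤ max 1 (2*(n:ℝ)/α) := by
      by_cases hul : IsLeaf parent u
      · rw [GSaux.sz_leaf parent hul]; simp
      · obtain ⟨c1, c2, -, hr1, hm1, hr2, hm2, -, -, -, hsu⟩ :=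
          GSaux.children_structure parent harb hbin hul
        have b1 := huch c1 hr1 hm1
        have b2 := huch c2 hr2 hm2
        have hce : (GSaux.sz parent u : ℝ) =
            (GSaux.sz parent c1 : ℝ) + (GSaux.sz parent c2 : ℝ) := by exact_mod_cast hsu
        refine le_trans ?_ (le_max_right _ _)
        have : 2*(n:ℝ)/α = (n:ℝ)/α + (n:ℝ)/α := by ring
        linarith
    set B := GSaux.sz parent u with hB
    set Mf := GSaux.leavesUnder parent h \ GSaux.leavesUnder parent u with hMf
    have hsubuh : GSaux.leavesUnder parent u ⊆ GSaux.leavesUnder parent h :=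
      GSaux.leavesUnder_mono parent hhu
    have hMcard : Mf.card = GSaux.sz parent h - B := Finset.card_sdiff_of_subset hsubuh
    have hble : B ≤ GSaux.sz parent h := GSaux.sz_mono parent hhu
    have hBM : B + Mf.card = GSaux.sz parent h := by omega
    have hgoodF : ∀ ab ∈ (GSaux.leavesUnder parent u ×ˢ Mf) ∪
        (Mf ×ˢ GSaux.leavesUnder parent u),
        (fun ab : V × V => IsLeaf parent ab.1 ∧ IsLeaf parent ab.2 ∧ ab.1 ≠ ab.2 ∧
          GoodSplit parent lca α ab.1 ab.2) ab := by
      rintro ⟨x, y⟩ hab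
      rcases Finset.mem_union.mp hab with hab | hab <;> rw [Finset.mem_product] at hab
      · obtain ⟨hx, hy⟩ := hab
        rw [hMf, Finset.mem_sdiff] at hy
        obtain ⟨hne', hgs, -⟩ := GSaux.goodsplit_main parent harb hbin hlca hα hhu
          hhle huT hx hy.1 hy.2
        exact ⟨((GSaux.mem_leavesUnder parent).mp hx).1,
          ((GSaux.mem_leavesUnder parent).mp hy.1).1, hne', hgs⟩
      · obtain ⟨hx, hy⟩ := hab
        rw [hMf, Finset.mem_sdiff] at hx
        obtain ⟨hne', -, hgs⟩ := GSaux.goodsplit_main parent harb hbin hlca hα hhu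
          hhle huT hy hx.1 hx.2
        exact ⟨((GSaux.mem_leavesUnder parent).mp hx.1).1,
          ((GSaux.mem_leavesUnder parent).mp hy).1, Ne.symm hne', hgs⟩
    have hnum : 2 * B * Mf.card ≤ NUM := by
      rw [hNUM]
      refine le_trans ?_ (GSaux.natCard_ge hgoodF)
      have hdisj : Disjoint (GSaux.leavesUnder parent u ×ˢ Mf)
          (Mf ×ˢ GSaux.leavesUnder parent u) := by
        rw [Finset.disjoint_left]
        rintro ⟨x, y⟩ hab1 hab2
        rw [Finset.mem_product] at hab1 hab2
        rw [hMf, Finset.mem_sdiff] at hab2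
        exact hab2.1.2 hab1.1
      rw [Finset.card_union_of_disjoint hdisj, Finset.card_product, Finset.card_product]
      have hBc : (GSaux.leavesUnder parent u).card = B := by rw [hB, GSaux.sz]
      rw [hBc]
      exact le_of_eq (by ring)
    have harith := GSaux.arith (n := n) (B := B) (M := Mf.card)
      (S := GSaux.sz parent h) hα hn3' huT hszu hS1 hBM
    have hnumr : 2 * (B:ℝ) * (Mf.card:ℝ) ≤ (NUM:ℝ) := by exact_mod_cast hnum
    have hdenr : (DEN:ℝ) ≤ (n:ℝ) * (n:ℝ) := by exact_mod_cast hdenle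
    have htpos : (0:ℝ) ≤ (α-5)/(2*α^2) :=
      div_nonneg (by linarith) (by positivity)
    calc (α - 5) / (2 * α ^ 2) * (DEN:ℝ)
        ≤ (α - 5) / (2 * α ^ 2) * ((n:ℝ) * (n:ℝ)) := by
          exact mul_le_mul_of_nonneg_left hdenr htpos
      _ = (α - 5) / (2 * α ^ 2) * (n:ℝ)^2 := by ring
      _ ≤ 2 * (B:ℝ) * (Mf.card:ℝ) := harith
      _ ≤ (NUM:ℝ) := hnumr
end

section
/- With the same sampling setup (K = C₂ log n independent uniform samples from V, count(s,X) counting sampled descendants of s), if D(s) < n/(d+2), then for a suitable constant C₂ (explicitly C₂ > 6(d+2)(d+1)² ln(2n)/log n), Pr[count(s,X) < K/(d+1)] ≥ 1 - 1/n². -/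
open MeasureTheory Finset

/-- `exp x ≤ 1 + x + (2/3) x²` for `0 ≤ x ≤ 1/2`. -/
lemma exp_le_quadratic_aux {x : ℝ} (h0 : 0 ≤ x) (h1 : x ≤ 1/2) :
    Real.exp x ≤ 1 + x + (2/3) * x ^ 2 := by
  have hx1 : |x| ≤ 1 := by rw [abs_of_nonneg h0]; linarith
  have hb := Real.exp_bound hx1 (n := 3) (by norm_num)
  have hsum : ∑ m ∈ Finset.range 3, x ^ m / (m.factorial : ℝ) = 1 + x + x ^ 2 / 2 := by
    norm_num [Finset.sum_range_succ]
  rw [hsum, abs_of_nonneg h0] at hb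
  have habs : Real.exp x - (1 + x + x ^ 2 / 2) ≤ x ^ 3 * (4 / (6 * 3)) := by
    have := abs_le.mp hb
    simpa [Nat.factorial] using this.2
  have hx3 : x ^ 3 ≤ (1/2) * x ^ 2 := by
    have : x ^ 3 = x * x ^ 2 := by ring
    rw [this]
    have := sq_nonneg x
    nlinarith
  nlinarith

/-- Chernoff-type bound for the upper tail of the binomial distribution. -/
lemma binomial_tail_le (K d : ℕ) (hd : 1 ≤ d) (p : ℝ) (hp0 : 0 ≤ p)
    (hp : p ≤ 1 / ((d : ℝ) + 2)) :
    ∑ j ∈ (Finset.range (K + 1)).filter (fun (j : ℕ) => (K : ℝ) / ((d : ℝ) + 1) ≤ (j : ℝ)),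
      (K.choose j : ℝ) * p ^ j * (1 - p) ^ (K - j)
    ≤ Real.exp (-(K : ℝ) / (3 * ((d : ℝ) + 1) ^ 2 * ((d : ℝ) + 2))) := by
  have hd1 : (1 : ℝ) ≤ (d : ℝ) := by exact_mod_cast hd
  set x : ℝ := 1 / ((d : ℝ) + 1) with hxdef
  have hdpos : (0 : ℝ) < (d : ℝ) + 1 := by linarith
  have hd2pos : (0 : ℝ) < (d : ℝ) + 2 := by linarith
  have hx0 : 0 < x := by positivity
  have hx2 : x ≤ 1/2 := by
    rw [hxdef, div_le_div_iff₀ hdpos (by norm_num)]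
    linarith
  have hp1 : p ≤ 1 := le_trans hp (by rw [div_le_one hd2pos]; linarith)
  have h1p : 0 ≤ 1 - p := by linarith
  -- p ≤ x / (1 + x)
  have hpx : p ≤ x / (1 + x) := by
    have : x / (1 + x) = 1 / ((d : ℝ) + 2) := by
      rw [hxdef]
      field_simp
      ring
    rw [this]; exact hp
  have h1x : (0:ℝ) < 1 + x := by linarith
  set u : ℝ := x ^ 2 * (3 + 2 * x) / (3 * (1 + x)) with hudef
  -- pointwise: 1 - p + p * exp x ≤ exp u
  have hbase : p * Real.exp x + (1 - p) ≤ Real.exp u := by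
    have hex1 : 1 ≤ Real.exp x := Real.one_le_exp (le_of_lt hx0)
    have hexb : Real.exp x - 1 ≤ x + (2/3) * x ^ 2 :=
      by have := exp_le_quadratic_aux (le_of_lt hx0) hx2; linarith
    have step1 : p * Real.exp x + (1 - p) = 1 + p * (Real.exp x - 1) := by ring
    have step2 : p * (Real.exp x - 1) ≤ (x / (1 + x)) * (x + (2/3) * x ^ 2) := by
      have h1 : p * (Real.exp x - 1) ≤ (x / (1 + x)) * (Real.exp x - 1) :=
        mul_le_mul_of_nonneg_right hpx (by linarith)
      have h2 : (x / (1 + x)) * (Real.exp x - 1) ≤ (x / (1 + x)) * (x + (2/3) * x ^ 2) :=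
        mul_le_mul_of_nonneg_left hexb (by positivity)
      linarith
    have step3 : (x / (1 + x)) * (x + (2/3) * x ^ 2) = u := by
      rw [hudef]; field_simp
    have step4 : 1 + u ≤ Real.exp u := by
      have := Real.add_one_le_exp u; linarith
    linarith
  -- main chain
  set pmf : ℕ → ℝ := fun j => (K.choose j : ℝ) * p ^ j * (1 - p) ^ (K - j) with hpmf
  have hpmf0 : ∀ j, 0 ≤ pmf j := by
    intro j
    apply mul_nonneg (mul_nonneg (by positivity) (pow_nonneg hp0 _)) (pow_nonneg h1p _)
  set S := (Finset.range (K + 1)).filter (fun (j : ℕ) => (K : ℝ) / ((d : ℝ) + 1) ≤ (j : ℝ)) with hS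
  have step1 : ∑ j ∈ S, pmf j ≤ ∑ j ∈ S, pmf j * Real.exp (x * j - x ^ 2 * K) := by
    apply Finset.sum_le_sum
    intro j hj
    have hjc : (K : ℝ) / ((d : ℝ) + 1) ≤ (j : ℝ) := (Finset.mem_filter.mp hj).2
    have hexp1 : 1 ≤ Real.exp (x * j - x ^ 2 * K) := by
      apply Real.one_le_exp
      have : (K : ℝ) * x ≤ (j : ℝ) := by
        rw [hxdef] at *
        calc (K : ℝ) * (1 / ((d:ℝ)+1)) = (K : ℝ) / ((d:ℝ)+1) := by ring
        _ ≤ (j : ℝ) := hjc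
      nlinarith [hx0.le]
    nth_rewrite 1 [← mul_one (pmf j)]
    exact mul_le_mul_of_nonneg_left hexp1 (hpmf0 j)
  have step2 : ∑ j ∈ S, pmf j * Real.exp (x * j - x ^ 2 * K)
      ≤ ∑ j ∈ Finset.range (K + 1), pmf j * Real.exp (x * j - x ^ 2 * K) := by
    apply Finset.sum_le_sum_of_subset_of_nonneg (Finset.filter_subset _ _)
    intro j _ _
    exact mul_nonneg (hpmf0 j) (Real.exp_pos _).le
  have step3 : ∑ j ∈ Finset.range (K + 1), pmf j * Real.exp (x * j - x ^ 2 * K)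
      = Real.exp (-(x ^ 2 * K)) * (p * Real.exp x + (1 - p)) ^ K := by
    rw [add_pow, Finset.mul_sum]
    apply Finset.sum_congr rfl
    intro j _
    rw [hpmf]
    have hxj : Real.exp (x * j - x ^ 2 * K)
        = Real.exp x ^ j * Real.exp (-(x ^ 2 * K)) := by
      rw [← Real.exp_nat_mul, ← Real.exp_add]
      congr 1
      ring
    rw [hxj, mul_pow]
    ring
  have step4 : (p * Real.exp x + (1 - p)) ^ K ≤ Real.exp u ^ K := by
    apply pow_le_pow_left₀ _ hbase
    positivity
  have step5 : Real.exp (-(x ^ 2 * K)) * Real.exp u ^ K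
      = Real.exp (-(K : ℝ) / (3 * ((d : ℝ) + 1) ^ 2 * ((d : ℝ) + 2))) := by
    rw [← Real.exp_nat_mul, ← Real.exp_add]
    congr 1
    rw [hudef, hxdef]
    field_simp
    ring
  calc ∑ j ∈ S, pmf j ≤ ∑ j ∈ Finset.range (K + 1), pmf j * Real.exp (x * j - x ^ 2 * K) :=
        le_trans step1 step2
    _ = Real.exp (-(x ^ 2 * K)) * (p * Real.exp x + (1 - p)) ^ K := step3
    _ ≤ Real.exp (-(x ^ 2 * K)) * Real.exp u ^ K :=
        mul_le_mul_of_nonneg_left step4 (Real.exp_pos _).le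
    _ = Real.exp (-(K : ℝ) / (3 * ((d : ℝ) + 1) ^ 2 * ((d : ℝ) + 2))) := step5

/-- Sampling `K = C₂ log n` vertices independently and uniformly from the `n` vertices of a
rooted tree, `count` (the number of sampled descendants of a vertex `s` with `D(s)`
descendants) is Binomial(`K`, `D(s)/n`).  If `D(s) < n/(d+2)` and
`C₂ > 6(d+2)(d+1)² ln(2n)/log n`, then `Pr[count < K/(d+1)] ≥ 1 - 1/n²`. -/
theorem descendant_estimate_upper {Ω : Type*} [MeasurableSpace Ω]
    (μ : Measure Ω) [IsProbabilityMeasure μ]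
    (n d D K : ℕ) (C₂ : ℝ)
    (hn : 2 ≤ n) (hd : 1 ≤ d) (hD : D ≤ n)
    (hK : (K : ℝ) = C₂ * Real.log n)
    (hC₂ : 6 * ((d : ℝ) + 2) * ((d : ℝ) + 1) ^ 2 * Real.log (2 * n) / Real.log n < C₂)
    (count : Ω → ℕ)
    (hmeas : Measurable count)
    -- `count` is Binomial(K, D/n)
    (hbin : ∀ j : ℕ, μ {ω | count ω = j} =
      ENNReal.ofReal ((K.choose j : ℝ) * ((D : ℝ) / n) ^ j * (1 - (D : ℝ) / n) ^ (K - j)))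
    (hDs : (D : ℝ) < (n : ℝ) / ((d : ℝ) + 2)) :
    ENNReal.ofReal (1 - 1 / (n : ℝ) ^ 2) ≤
      μ {ω | (count ω : ℝ) < (K : ℝ) / ((d : ℝ) + 1)} := by
  have hn0 : (0 : ℝ) < (n : ℝ) := by
    have : (0:ℕ) < n := by omega
    exact_mod_cast this
  have hd1 : (1 : ℝ) ≤ (d : ℝ) := by exact_mod_cast hd
  have hd2pos : (0 : ℝ) < (d : ℝ) + 2 := by linarith
  set p : ℝ := (D : ℝ) / n with hpdef
  have hp0 : 0 ≤ p := by positivity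
  have hp1 : p ≤ 1 := by
    rw [hpdef, div_le_one hn0]
    exact_mod_cast hD
  have hp : p ≤ 1 / ((d : ℝ) + 2) := by
    rw [hpdef, div_le_div_iff₀ hn0 hd2pos]
    have h1 : (D : ℝ) * ((d : ℝ) + 2) < ((n : ℝ) / ((d : ℝ) + 2)) * ((d : ℝ) + 2) :=
      mul_lt_mul_of_pos_right hDs hd2pos
    have h2 : ((n : ℝ) / ((d : ℝ) + 2)) * ((d : ℝ) + 2) = 1 * (n : ℝ) := by field_simp
    linarith
  have h1p : (0:ℝ) ≤ 1 - p := by linarith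
  have hpmf0 : ∀ j : ℕ, 0 ≤ (K.choose j : ℝ) * p ^ j * (1 - p) ^ (K - j) := fun j =>
    mul_nonneg (mul_nonneg (by positivity) (pow_nonneg hp0 _)) (pow_nonneg h1p _)
  -- the total probability is 1
  have htot : ∑ j ∈ Finset.range (K + 1), (K.choose j : ℝ) * p ^ j * (1 - p) ^ (K - j) = 1 := by
    have h1 : ∑ j ∈ Finset.range (K + 1), (K.choose j : ℝ) * p ^ j * (1 - p) ^ (K - j)
        = ∑ m ∈ Finset.range (K + 1), p ^ m * (1 - p) ^ (K - m) * (K.choose m : ℝ) :=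
      Finset.sum_congr rfl (fun j _ => by ring)
    rw [h1, ← add_pow]
    norm_num
  -- measurability facts
  have hAm : ∀ j : ℕ, MeasurableSet {ω | count ω = j} := fun j =>
    hmeas (measurableSet_singleton j)
  have hUm : MeasurableSet (⋃ j ∈ Finset.range (K + 1), {ω | count ω = j}) :=
    Finset.measurableSet_biUnion _ (fun j _ => hAm j)
  have hdisj : (↑(Finset.range (K + 1)) : Set ℕ).PairwiseDisjoint
      (fun j => {ω | count ω = j}) := by
    intro i _ j _ hij
    simp only [Function.onFun]
    rw [Set.disjoint_left]
    intro ω hωi hωj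
    exact hij ((hωi : count ω = i) ▸ (hωj : count ω = j))
  have hμU : μ (⋃ j ∈ Finset.range (K + 1), {ω | count ω = j}) = 1 := by
    rw [measure_biUnion_finset hdisj (fun j _ => hAm j)]
    have h2 : ∀ j ∈ Finset.range (K + 1), μ {ω | count ω = j}
        = ENNReal.ofReal ((K.choose j : ℝ) * p ^ j * (1 - p) ^ (K - j)) := fun j _ => hbin j
    rw [Finset.sum_congr rfl h2,
      ← ENNReal.ofReal_sum_of_nonneg (fun j _ => hpmf0 j), htot, ENNReal.ofReal_one]
  have hμUc : μ (⋃ j ∈ Finset.range (K + 1), {ω | count ω = j})ᶜ = 0 := by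
    rw [prob_compl_eq_one_sub hUm, hμU, tsub_self]
  have hEm : MeasurableSet {ω | (count ω : ℝ) < (K : ℝ) / ((d : ℝ) + 1)} := by
    have h : {ω | (count ω : ℝ) < (K : ℝ) / ((d : ℝ) + 1)}
        = count ⁻¹' {j : ℕ | (j : ℝ) < (K : ℝ) / ((d : ℝ) + 1)} := rfl
    rw [h]
    exact hmeas (Set.to_countable _).measurableSet
  -- complement inclusion
  have hEc : {ω | (count ω : ℝ) < (K : ℝ) / ((d : ℝ) + 1)}ᶜ ⊆
      (⋃ j ∈ Finset.range (K + 1), {ω | count ω = j})ᶜ ∪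
      ⋃ j ∈ (Finset.range (K + 1)).filter
        (fun (j : ℕ) => (K : ℝ) / ((d : ℝ) + 1) ≤ (j : ℝ)), {ω | count ω = j} := by
    intro ω hω
    have hω' : (K : ℝ) / ((d : ℝ) + 1) ≤ (count ω : ℝ) := not_lt.mp hω
    by_cases hcase : count ω ≤ K
    · right
      refine Set.mem_biUnion ?_ rfl
      exact Finset.mem_filter.mpr ⟨Finset.mem_range.mpr (by omega), hω'⟩
    · left
      intro hωU
      rcases Set.mem_iUnion₂.mp hωU with ⟨j, hj, hωj⟩
      have h1 : count ω = j := hωj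
      have h2 : j < K + 1 := Finset.mem_range.mp hj
      omega
  have hμEc : μ {ω | (count ω : ℝ) < (K : ℝ) / ((d : ℝ) + 1)}ᶜ ≤
      ENNReal.ofReal (∑ j ∈ (Finset.range (K + 1)).filter
        (fun (j : ℕ) => (K : ℝ) / ((d : ℝ) + 1) ≤ (j : ℝ)),
        (K.choose j : ℝ) * p ^ j * (1 - p) ^ (K - j)) := by
    calc μ {ω | (count ω : ℝ) < (K : ℝ) / ((d : ℝ) + 1)}ᶜ
        ≤ μ ((⋃ j ∈ Finset.range (K + 1), {ω | count ω = j})ᶜ ∪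
            ⋃ j ∈ (Finset.range (K + 1)).filter
              (fun (j : ℕ) => (K : ℝ) / ((d : ℝ) + 1) ≤ (j : ℝ)), {ω | count ω = j}) :=
          measure_mono hEc
      _ ≤ μ (⋃ j ∈ Finset.range (K + 1), {ω | count ω = j})ᶜ +
            μ (⋃ j ∈ (Finset.range (K + 1)).filter
              (fun (j : ℕ) => (K : ℝ) / ((d : ℝ) + 1) ≤ (j : ℝ)), {ω | count ω = j}) :=
          measure_union_le _ _
      _ = μ (⋃ j ∈ (Finset.range (K + 1)).filter
              (fun (j : ℕ) => (K : ℝ) / ((d : ℝ) + 1) ≤ (j : ℝ)), {ω | count ω = j}) := by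
          rw [hμUc, zero_add]
      _ ≤ ∑ j ∈ (Finset.range (K + 1)).filter
              (fun (j : ℕ) => (K : ℝ) / ((d : ℝ) + 1) ≤ (j : ℝ)), μ {ω | count ω = j} :=
          measure_biUnion_finset_le _ _
      _ = ENNReal.ofReal (∑ j ∈ (Finset.range (K + 1)).filter
              (fun (j : ℕ) => (K : ℝ) / ((d : ℝ) + 1) ≤ (j : ℝ)),
              (K.choose j : ℝ) * p ^ j * (1 - p) ^ (K - j)) := by
          rw [ENNReal.ofReal_sum_of_nonneg (fun j _ => hpmf0 j)]
          exact Finset.sum_congr rfl (fun j _ => hbin j)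
  -- the real tail bound
  have hlogn : 0 < Real.log n := Real.log_pos (by exact_mod_cast hn)
  have hKbig : 6 * ((d : ℝ) + 2) * ((d : ℝ) + 1) ^ 2 * Real.log (2 * n) < (K : ℝ) := by
    rw [hK]
    have h1 := (div_lt_iff₀ hlogn).mp hC₂
    linarith
  have hlog2n : Real.log n ≤ Real.log (2 * n) :=
    Real.log_le_log hn0 (by linarith)
  have hexp : Real.exp (-(K : ℝ) / (3 * ((d : ℝ) + 1) ^ 2 * ((d : ℝ) + 2)))
      ≤ 1 / (n : ℝ) ^ 2 := by
    have hpos : (0 : ℝ) < 3 * ((d : ℝ) + 1) ^ 2 * ((d : ℝ) + 2) := by positivity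
    have h2 : Real.log ((n : ℝ) ^ 2)
        ≤ (K : ℝ) / (3 * ((d : ℝ) + 1) ^ 2 * ((d : ℝ) + 2)) := by
      rw [Real.log_pow, le_div_iff₀ hpos]
      have h3 : 6 * ((d : ℝ) + 2) * ((d : ℝ) + 1) ^ 2 * Real.log n
          ≤ 6 * ((d : ℝ) + 2) * ((d : ℝ) + 1) ^ 2 * Real.log (2 * n) :=
        mul_le_mul_of_nonneg_left hlog2n (by positivity)
      push_cast
      nlinarith
    calc Real.exp (-(K : ℝ) / (3 * ((d : ℝ) + 1) ^ 2 * ((d : ℝ) + 2)))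
        ≤ Real.exp (-(Real.log ((n : ℝ) ^ 2))) := Real.exp_le_exp.mpr (by rw [neg_div]; linarith)
      _ = 1 / (n : ℝ) ^ 2 := by
          rw [Real.exp_neg, Real.exp_log (by positivity), one_div]
  have htail : ∑ j ∈ (Finset.range (K + 1)).filter
      (fun (j : ℕ) => (K : ℝ) / ((d : ℝ) + 1) ≤ (j : ℝ)),
      (K.choose j : ℝ) * p ^ j * (1 - p) ^ (K - j) ≤ 1 / (n : ℝ) ^ 2 :=
    le_trans (binomial_tail_le K d hd p hp0 hp) hexp
  -- conclusion
  have hfinal : μ {ω | (count ω : ℝ) < (K : ℝ) / ((d : ℝ) + 1)}ᶜ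
      ≤ ENNReal.ofReal (1 / (n : ℝ) ^ 2) :=
    le_trans hμEc (ENNReal.ofReal_le_ofReal htail)
  have hE1 : μ {ω | (count ω : ℝ) < (K : ℝ) / ((d : ℝ) + 1)}
      = 1 - μ {ω | (count ω : ℝ) < (K : ℝ) / ((d : ℝ) + 1)}ᶜ := by
    have h := prob_compl_eq_one_sub (μ := μ) hEm.compl
    rwa [compl_compl] at h
  calc ENNReal.ofReal (1 - 1 / (n : ℝ) ^ 2)
      = 1 - ENNReal.ofReal (1 / (n : ℝ) ^ 2) := by
        rw [ENNReal.ofReal_sub 1 (by positivity), ENNReal.ofReal_one]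
    _ ≤ 1 - μ {ω | (count ω : ℝ) < (K : ℝ) / ((d : ℝ) + 1)}ᶜ := tsub_le_tsub_left hfinal 1
    _ = μ {ω | (count ω : ℝ) < (K : ℝ) / ((d : ℝ) + 1)} := hE1.symm
end

section
/- Any deterministic algorithm that reconstructs an arbitrary n-node rooted tree of maximum degree d using path queries must make Ω(dn) queries in the worst case. Specifically, on the family of 'broom' trees consisting of a root with d chains attached, determining for each non-root vertex which chain it belongs to requires at least d-1 queries per vertex in the worst case, even when the root is known. -/
/-- A deterministic query algorithm modeled as a binary decision tree: each internal node
issues a path query `(u, v)` and branches on the Boolean answer; leaves output an answer. -/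
inductive DTree (V O : Type*) : Type _
  | leaf : O → DTree V O
  | node : V × V → DTree V O → DTree V O → DTree V O

/-- Run a decision tree against an oracle answering queries. -/
def DTree.run {V O : Type*} : DTree V O → ((V × V) → Bool) → O
  | .leaf o, _ => o
  | .node q t f, oracle => if oracle q then t.run oracle else f.run oracle

/-- Worst-case number of queries issued by a decision tree. -/
def DTree.depth {V O : Type*} : DTree V O → ℕ
  | .leaf _ => 0
  | .node _ t f => 1 + max t.depth f.depth

/-- The path-query oracle of the rooted tree described by the parent map `p`:
`path(u, v) = 1` iff `u` is a (reflexive) ancestor of `v`. -/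
noncomputable def pathOracle {n : ℕ} (p : Fin n → Fin n) : Fin n × Fin n → Bool :=
  fun q => @decide (∃ k : ℕ, p^[k] q.2 = q.1) (Classical.propDecidable _)

/-- A 'broom' tree on `Fin n`: a root `r` with exactly `d` chains attached. -/
def IsBroom {n : ℕ} (p : Fin n → Fin n) (r : Fin n) (d : ℕ) : Prop :=
  p r = r ∧ (∀ v : Fin n, ∃ k : ℕ, p^[k] v = r) ∧
  Nat.card {v : Fin n | v ≠ r ∧ p v = r} = d ∧
  ∀ v : Fin n, v ≠ r → Nat.card {u : Fin n | p u = v ∧ u ≠ v} ≤ 1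

namespace PQLB

structure Ctx (n d : ℕ) : Type where
  r : Fin n
  H : Finset (Fin n)
  F : Finset (Fin n)
  head : Fin d → Fin n
  head_mem : ∀ i, head i ∈ H
  head_inj : Function.Injective head
  head_surj : ∀ h ∈ H, ∃ i, head i = h
  r_not_H : r ∉ H
  r_not_F : r ∉ F
  disj : ∀ v, v ∈ H → v ∉ F
  tri : ∀ v : Fin n, v = r ∨ v ∈ H ∨ v ∈ F
  card_H : H.card = d
  dpos : 0 < d

variable {n d : ℕ}

open Classical in
noncomputable def pmap (C : Ctx n d) (σ : Fin n → Fin d) (x : Fin n) : Fin n :=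
  if _ : x ∈ C.F then
    (if h : (C.F.filter (fun z => z < x ∧ σ z = σ x)).Nonempty
      then (C.F.filter (fun z => z < x ∧ σ z = σ x)).max' h
      else C.head (σ x))
  else C.r

def Anc (C : Ctx n d) (σ : Fin n → Fin d) (x y : Fin n) : Prop :=
  x = C.r ∨ x = y ∨ (y ∈ C.F ∧ (x = C.head (σ y) ∨ (x ∈ C.F ∧ σ x = σ y ∧ x < y)))

def rnk (C : Ctx n d) (y : Fin n) : ℕ := if y ∈ C.F then 2 + y.val else if y = C.r then 0 else 1

lemma pmap_r (C : Ctx n d) (σ : Fin n → Fin d) : pmap C σ C.r = C.r := by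
  simp [pmap, C.r_not_F]

lemma pmap_not_F (C : Ctx n d) (σ : Fin n → Fin d) {x : Fin n} (hx : x ∉ C.F) :
    pmap C σ x = C.r := by simp [pmap, hx]

lemma iterate_r (C : Ctx n d) (σ : Fin n → Fin d) (k : ℕ) :
    (pmap C σ)^[k] C.r = C.r := Function.iterate_fixed (pmap_r C σ) k

lemma exists_iterate_iff (f : Fin n → Fin n) (y x : Fin n) :
    (∃ k, f^[k] y = x) ↔ x = y ∨ ∃ k, f^[k] (f y) = x := by
  constructor
  · rintro ⟨k, hk⟩
    cases k with
    | zero => exact Or.inl hk.symm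
    | succ k => exact Or.inr ⟨k, by rwa [Function.iterate_succ_apply] at hk⟩
  · rintro (rfl | ⟨k, hk⟩)
    · exact ⟨0, rfl⟩
    · exact ⟨k + 1, by rwa [Function.iterate_succ_apply]⟩

lemma anc_iff (C : Ctx n d) (σ : Fin n → Fin d) (x y : Fin n) :
    (∃ k, (pmap C σ)^[k] y = x) ↔ Anc C σ x y := by
  suffices key : ∀ N y x, rnk C y < N → ((∃ k, (pmap C σ)^[k] y = x) ↔ Anc C σ x y) from
    key (rnk C y + 1) y x (Nat.lt_succ_self _)
  intro N
  induction N with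
  | zero => intro y x hy; omega
  | succ N ih =>
    intro y x hy
    rcases C.tri y with hyr | hyH | hyF
    · subst hyr
      rw [exists_iterate_iff, pmap_r]
      constructor
      · rintro (h | ⟨k, hk⟩)
        · exact Or.inr (Or.inl h)
        · exact Or.inl ((iterate_r C σ k ▸ hk).symm)
      · rintro (rfl | rfl | ⟨hF, _⟩)
        · exact Or.inr ⟨0, rfl⟩
        · exact Or.inl rfl
        · exact absurd hF C.r_not_F
    · have hyF' : y ∉ C.F := C.disj y hyH
      rw [exists_iterate_iff, pmap_not_F C σ hyF']
      constructor
      · rintro (h | ⟨k, hk⟩)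
        · exact Or.inr (Or.inl h)
        · exact Or.inl ((iterate_r C σ k ▸ hk).symm)
      · rintro (rfl | rfl | ⟨hF, _⟩)
        · exact Or.inr ⟨0, rfl⟩
        · exact Or.inl rfl
        · exact absurd hF hyF'
    · have hry : y ≠ C.r := fun h => C.r_not_F (h ▸ hyF)
      have hrnk : rnk C y = 2 + y.val := by simp [rnk, hyF]
      by_cases hP : (C.F.filter (fun z => z < y ∧ σ z = σ y)).Nonempty
      · set P := C.F.filter (fun z => z < y ∧ σ z = σ y) with hPd
        set z := P.max' hP with hzd
        have hzP : z ∈ P := P.max'_mem hP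
        have hzF : z ∈ C.F := (Finset.mem_filter.mp hzP).1
        have hzy : z < y := (Finset.mem_filter.mp hzP).2.1
        have hzσ : σ z = σ y := (Finset.mem_filter.mp hzP).2.2
        have hpy : pmap C σ y = z := by simp [pmap, hyF, hPd, hP, hzd]; exact dif_pos hP
        have hzrnk : rnk C z < N := by
          have : rnk C z = 2 + z.val := by simp [rnk, hzF]
          have hlt : z.val < y.val := hzy
          omega
        rw [exists_iterate_iff, hpy, ih z x hzrnk]
        unfold Anc
        constructor
        · rintro (h1 | h2 | rfl | ⟨hzF', hh⟩)
          · exact Or.inr (Or.inl h1)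
          · exact Or.inl h2
          · exact Or.inr (Or.inr ⟨hyF, Or.inr ⟨hzF, hzσ, hzy⟩⟩)
          · rcases hh with hh | ⟨hxF, hσ, hxz⟩
            · exact Or.inr (Or.inr ⟨hyF, Or.inl (by rw [hh, hzσ])⟩)
            · exact Or.inr (Or.inr ⟨hyF, Or.inr ⟨hxF, hσ.trans hzσ, hxz.trans hzy⟩⟩)
        · rintro (h | h | ⟨_, hh⟩)
          · exact Or.inr (Or.inl h)
          · exact Or.inl h
          · rcases hh with hh | ⟨hxF, hσ, hxy⟩
            · exact Or.inr (Or.inr (Or.inr ⟨hzF, Or.inl (by rw [hh, hzσ])⟩))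
            · have hxP : x ∈ P := Finset.mem_filter.mpr ⟨hxF, hxy, hσ⟩
              have hxz : x ≤ z := P.le_max' x hxP
              rcases lt_or_eq_of_le hxz with h' | h'
              · exact Or.inr (Or.inr (Or.inr ⟨hzF, Or.inr ⟨hxF, hσ.trans hzσ.symm, h'⟩⟩))
              · exact Or.inr (Or.inr (Or.inl h'))
      · have hpy : pmap C σ y = C.head (σ y) := by simp [pmap, hyF, hP]
        have hH : C.head (σ y) ∈ C.H := C.head_mem _
        have hHF : C.head (σ y) ∉ C.F := C.disj _ hH
        have hrnkh : rnk C (C.head (σ y)) < N := by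
          have : rnk C (C.head (σ y)) ≤ 1 := by
            simp only [rnk, hHF, if_false]; split <;> omega
          omega
        rw [exists_iterate_iff, hpy, ih _ x hrnkh]
        unfold Anc
        constructor
        · rintro (h1 | h2 | rfl | ⟨hF', _⟩)
          · exact Or.inr (Or.inl h1)
          · exact Or.inl h2
          · exact Or.inr (Or.inr ⟨hyF, Or.inl rfl⟩)
          · exact absurd hF' hHF
        · rintro (h | h | ⟨_, hh⟩)
          · exact Or.inr (Or.inl h)
          · exact Or.inl h
          · rcases hh with hh | ⟨hxF, hσ, hxy⟩
            · exact Or.inr (Or.inr (Or.inl hh))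
            · exact absurd (Finset.mem_filter.mpr ⟨hxF, hxy, hσ⟩)
                (fun hmem => hP ⟨x, hmem⟩)


lemma oracle_true (C : Ctx n d) (σ : Fin n → Fin d) (q : Fin n × Fin n) :
    pathOracle (pmap C σ) q = true ↔ Anc C σ q.1 q.2 := by
  unfold pathOracle
  exact (@decide_eq_true_iff _ (Classical.propDecidable _)).trans (anc_iff C σ q.1 q.2)

lemma oracle_false (C : Ctx n d) (σ : Fin n → Fin d) (q : Fin n × Fin n) :
    pathOracle (pmap C σ) q = false ↔ ¬ Anc C σ q.1 q.2 := by
  unfold pathOracle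
  exact (@decide_eq_false_iff_not _ (Classical.propDecidable _)).trans
    (not_congr (anc_iff C σ q.1 q.2))

/-- structure facts about `pmap` on free vertices -/
lemma pmap_free (C : Ctx n d) (σ : Fin n → Fin d) {u : Fin n} (hu : u ∈ C.F) :
    (pmap C σ u ∈ C.F ∧ pmap C σ u < u ∧ σ (pmap C σ u) = σ u ∧
      (∀ w ∈ C.F, w < u → σ w = σ u → w ≤ pmap C σ u)) ∨
    (pmap C σ u = C.head (σ u) ∧ ∀ w ∈ C.F, w < u → σ w ≠ σ u) := by
  classical
  by_cases hP : (C.F.filter (fun z => z < u ∧ σ z = σ u)).Nonempty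
  · left
    have hpy : pmap C σ u = (C.F.filter (fun z => z < u ∧ σ z = σ u)).max' hP := by
      simp [pmap, hu, hP]
    have hmem := (C.F.filter (fun z => z < u ∧ σ z = σ u)).max'_mem hP
    rw [Finset.mem_filter] at hmem
    refine ⟨hpy ▸ hmem.1, hpy ▸ hmem.2.1, hpy ▸ hmem.2.2, ?_⟩
    intro w hw hwu hwσ
    rw [hpy]
    exact Finset.le_max' _ w (Finset.mem_filter.mpr ⟨hw, hwu, hwσ⟩)
  · right
    constructor
    · simp [pmap, hu, hP]
    · intro w hw hwu hwσ
      exact hP ⟨w, Finset.mem_filter.mpr ⟨hw, hwu, hwσ⟩⟩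

lemma pmap_ne_r (C : Ctx n d) (σ : Fin n → Fin d) {u : Fin n} (hu : u ∈ C.F) :
    pmap C σ u ≠ C.r := by
  rcases pmap_free C σ hu with ⟨h, _⟩ | ⟨h, _⟩
  · exact fun he => C.r_not_F (he ▸ h)
  · exact fun he => C.r_not_H (he ▸ h ▸ C.head_mem (σ u))

lemma broom (C : Ctx n d) (σ : Fin n → Fin d) : IsBroom (pmap C σ) C.r d := by
  classical
  refine ⟨pmap_r C σ, ?_, ?_, ?_⟩
  · intro v
    rw [anc_iff]
    exact Or.inl rfl
  · have hset : {v : Fin n | v ≠ C.r ∧ pmap C σ v = C.r} = (C.H : Set (Fin n)) := by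
      ext v
      simp only [Set.mem_setOf_eq, Finset.coe_mem, Set.mem_setOf_eq, Finset.mem_coe]
      constructor
      · rintro ⟨hvr, hpv⟩
        rcases C.tri v with rfl | hH | hF
        · exact absurd rfl hvr
        · exact hH
        · exact absurd hpv (pmap_ne_r C σ hF)
      · intro hv
        refine ⟨fun he => C.r_not_H (he ▸ hv), pmap_not_F C σ (C.disj v hv)⟩
    rw [hset]
    rw [Nat.card_coe_set_eq, Set.ncard_coe_finset, C.card_H]
  · intro v hv
    have hsub : {u : Fin n | pmap C σ u = v ∧ u ≠ v}.Subsingleton := by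
      intro u1 h1 u2 h2
      simp only [Set.mem_setOf_eq] at h1 h2
      -- both u1 u2 are free
      have hF : ∀ u : Fin n, pmap C σ u = v → u ∈ C.F := by
        intro u hu
        rcases C.tri u with rfl | hH | hF
        · exact absurd (pmap_r C σ ▸ hu) (Ne.symm hv)
        · exact absurd (pmap_not_F C σ (C.disj u hH) ▸ hu) (Ne.symm hv)
        · exact hF
      have h1F := hF u1 h1.1
      have h2F := hF u2 h2.1
      -- key : if u < u' with both mapping to v then False
      have key : ∀ u u' : Fin n, u ∈ C.F → u' ∈ C.F → pmap C σ u = v → pmap C σ u' = v →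
          u < u' → False := by
        intro u u' huF hu'F hpu hpu' huu
        rcases pmap_free C σ huF with ⟨hvF, hvu, hσv, _⟩ | ⟨hhd, _⟩ <;>
          rcases pmap_free C σ hu'F with ⟨hvF', hvu', hσv', hmax'⟩ | ⟨hhd', hnone'⟩
        · -- both pred case : σ u = σ v = σ u', u ≤ pmap u' = v < u
          rw [hpu] at hvF hvu hσv
          rw [hpu'] at hvF' hvu' hσv' hmax'
          have : u ≤ v := hmax' u huF huu (hσv.symm.trans hσv')
          exact absurd (lt_of_le_of_lt this hvu) (lt_irrefl u)
        · -- u pred (v ∈ F), u' head (v ∈ H)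
          rw [hpu] at hvF
          rw [hpu'] at hhd'
          exact C.disj v (hhd' ▸ C.head_mem (σ u')) hvF
        · rw [hpu'] at hvF'
          rw [hpu] at hhd
          exact C.disj v (hhd ▸ C.head_mem (σ u)) hvF'
        · -- both head case
          rw [hpu] at hhd; rw [hpu'] at hhd'
          have hσ : σ u = σ u' := C.head_inj (hhd.symm.trans hhd')
          exact hnone' u huF huu hσ
      rcases lt_trichotomy u1 u2 with h | h | h
      · exact absurd (key u1 u2 h1F h2F h1.1 h2.1 h) (fun f => f)
      · exact h
      · exact absurd (key u2 u1 h2F h1F h2.1 h1.1 h) (fun f => f)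
    rw [Nat.card_coe_set_eq]
    rw [Set.ncard_le_one_iff]
    intro a b ha hb
    exact hsub ha hb

lemma pmap_determines (C : Ctx n d) (σ σ' : Fin n → Fin d) {v : Fin n} (hv : v ∈ C.F)
    (h : pmap C σ = pmap C σ') : σ v = σ' v := by
  have h1 : Anc C σ (C.head (σ v)) v := Or.inr (Or.inr ⟨hv, Or.inl rfl⟩)
  rw [← anc_iff, h, anc_iff] at h1
  rcases h1 with he | he | ⟨_, he | ⟨heF, _⟩⟩
  · exact absurd (he ▸ C.head_mem (σ v)) C.r_not_H
  · exact absurd (he ▸ C.head_mem (σ v)) (fun hh => C.disj v hh hv)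
  · exact C.head_inj he
  · exact absurd heF (C.disj _ (C.head_mem (σ v)))


/-! ### Greedy list coloring -/

lemma greedy {V K : Type*} [DecidableEq V] [DecidableEq K] (c₀ : K)
    (E : Finset (V × V)) (hE : ∀ e ∈ E, e.1 ≠ e.2) (A : V → Finset K) :
    ∀ S : Finset V,
      (∀ x ∈ S,
        (E.filter fun e => (e.1 = x ∨ e.2 = x) ∧ e.1 ∈ S ∧ e.2 ∈ S).card + 1 ≤ (A x).card) →
      ∃ σ : V → K, (∀ v ∈ S, σ v ∈ A v) ∧ ∀ e ∈ E, e.1 ∈ S → e.2 ∈ S → σ e.1 ≠ σ e.2 := by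
  intro S
  induction S using Finset.strongInduction with
  | _ S ih =>
    intro hS
    rcases S.eq_empty_or_nonempty with rfl | hne
    · exact ⟨fun _ => c₀, by simp, fun e _ h1 => absurd h1 (Finset.notMem_empty _)⟩
    obtain ⟨v, hv⟩ := hne
    have hsub : S.erase v ⊂ S := Finset.erase_ssubset hv
    obtain ⟨σ', hσ'A, hσ'E⟩ := ih (S.erase v) hsub (fun x hx => by
      refine le_trans (Nat.add_le_add_right (Finset.card_le_card ?_) 1)
        (hS x (Finset.mem_of_mem_erase hx))
      intro e he
      rw [Finset.mem_filter] at he ⊢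
      exact ⟨he.1, he.2.1, Finset.mem_of_mem_erase he.2.2.1, Finset.mem_of_mem_erase he.2.2.2⟩)
    set N : Finset K := (E.filter fun e => (e.1 = v ∨ e.2 = v) ∧ e.1 ∈ S ∧ e.2 ∈ S).image
      (fun e => if e.1 = v then σ' e.2 else σ' e.1) with hN
    have hNcard : N.card + 1 ≤ (A v).card :=
      le_trans (Nat.add_le_add_right Finset.card_image_le 1) (hS v hv)
    have : ¬ (A v ⊆ N) := fun h => by have := Finset.card_le_card h; omega
    obtain ⟨c, hcA, hcN⟩ := Finset.not_subset.mp this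
    refine ⟨Function.update σ' v c, ?_, ?_⟩
    · intro w hw
      rcases eq_or_ne w v with rfl | hwv
      · rwa [Function.update_self]
      · rw [Function.update_of_ne hwv]
        exact hσ'A w (Finset.mem_erase.mpr ⟨hwv, hw⟩)
    · intro e he he1 he2
      have hne12 := hE e he
      by_cases h1 : e.1 = v
      · have h2 : e.2 ≠ v := fun h => hne12 (h1.trans h.symm)
        rw [h1, Function.update_self, Function.update_of_ne h2]
        intro hcontra
        apply hcN
        rw [hN]
        refine Finset.mem_image.mpr ⟨e, Finset.mem_filter.mpr ⟨he, Or.inl h1, he1, he2⟩, ?_⟩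
        rw [if_pos h1, ← hcontra]
      · by_cases h2 : e.2 = v
        · rw [h2, Function.update_self, Function.update_of_ne h1]
          intro hcontra
          apply hcN
          rw [hN]
          refine Finset.mem_image.mpr ⟨e, Finset.mem_filter.mpr ⟨he, Or.inr h2, he1, he2⟩, ?_⟩
          rw [if_neg h1, hcontra]
        · rw [Function.update_of_ne h1, Function.update_of_ne h2]
          exact hσ'E e he (Finset.mem_erase.mpr ⟨h1, he1⟩) (Finset.mem_erase.mpr ⟨h2, he2⟩)

/-! ### Adversary state -/

structure St (n d : ℕ) where
  A : Fin n → Finset (Fin d)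
  E : Finset (Fin n × Fin n)

def deg (s : St n d) (v : Fin n) : ℕ := (s.E.filter fun e => e.1 = v ∨ e.2 = v).card

def Wf (C : Ctx n d) (s : St n d) : Prop := ∀ e ∈ s.E, e.1 ∈ C.F ∧ e.2 ∈ C.F ∧ e.1 < e.2

def Inv (C : Ctx n d) (s : St n d) : Prop := Wf C s ∧ ∀ v ∈ C.F, deg s v + 1 ≤ (s.A v).card

def Col (C : Ctx n d) (s : St n d) (σ : Fin n → Fin d) : Prop :=
  (∀ v ∈ C.F, σ v ∈ s.A v) ∧ ∀ e ∈ s.E, σ e.1 ≠ σ e.2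

def tm (s : St n d) (v : Fin n) : ℤ := ((s.A v).card : ℤ) - 1 - (deg s v : ℤ)

noncomputable def Phi (C : Ctx n d) (s : St n d) : ℤ := ∑ v ∈ C.F, tm s v

lemma wf_ne (C : Ctx n d) {s : St n d} (hwf : Wf C s) {e} (he : e ∈ s.E) : e.1 ≠ e.2 :=
  ne_of_lt (hwf e he).2.2

/-- prescribed-color coloring existence -/
lemma ext_coloring (C : Ctx n d) (s : St n d) (hInv : Inv C s) {v0 : Fin n} (hv0 : v0 ∈ C.F)
    {c0 : Fin d} (hc0 : c0 ∈ s.A v0) : ∃ σ, Col C s σ ∧ σ v0 = c0 := by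
  classical
  set A' : Fin n → Finset (Fin d) :=
    fun x => if (v0, x) ∈ s.E ∨ (x, v0) ∈ s.E then (s.A x).erase c0 else s.A x with hA'
  have hA'sub : ∀ x, A' x ⊆ s.A x := by
    intro x; rw [hA']; dsimp only; split
    · exact Finset.erase_subset _ _
    · exact subset_rfl
  obtain ⟨σ', hσ'A, hσ'E⟩ := greedy ⟨0, C.dpos⟩ s.E (fun e he => wf_ne C hInv.1 he) A'
      (C.F.erase v0) (by
    intro x hx
    have hxF := Finset.mem_of_mem_erase hx
    have hxv0 := (Finset.mem_erase.mp hx).1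
    by_cases hadj : (v0, x) ∈ s.E ∨ (x, v0) ∈ s.E
    · obtain ⟨e0, he0E, he0x, he0v⟩ : ∃ e0 ∈ s.E, (e0.1 = x ∨ e0.2 = x) ∧
          (e0.1 = v0 ∨ e0.2 = v0) := by
        rcases hadj with h | h
        · exact ⟨(v0, x), h, Or.inr rfl, Or.inl rfl⟩
        · exact ⟨(x, v0), h, Or.inl rfl, Or.inr rfl⟩
      have he0 : e0 ∈ s.E ∧ (e0.1 = x ∨ e0.2 = x) ∧ (e0.1 = v0 ∨ e0.2 = v0) :=
        ⟨he0E, he0x, he0v⟩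
      have he0f : e0 ∈ s.E.filter (fun e => e.1 = x ∨ e.2 = x) :=
        Finset.mem_filter.mpr ⟨he0.1, he0.2.1⟩
      have hsubet : (s.E.filter fun e => (e.1 = x ∨ e.2 = x) ∧ e.1 ∈ C.F.erase v0 ∧
          e.2 ∈ C.F.erase v0) ⊆ (s.E.filter (fun e => e.1 = x ∨ e.2 = x)).erase e0 := by
        intro e he
        rw [Finset.mem_filter] at he
        refine Finset.mem_erase.mpr ⟨?_, Finset.mem_filter.mpr ⟨he.1, he.2.1⟩⟩
        intro hee
        subst hee
        rcases he0.2.2 with h | h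
        · exact (Finset.mem_erase.mp he.2.2.1).1 h
        · exact (Finset.mem_erase.mp he.2.2.2).1 h
      have h1 : (s.E.filter fun e => (e.1 = x ∨ e.2 = x) ∧ e.1 ∈ C.F.erase v0 ∧
          e.2 ∈ C.F.erase v0).card ≤ deg s x - 1 := by
        refine le_trans (Finset.card_le_card hsubet) ?_
        rw [Finset.card_erase_of_mem he0f]
        simp [deg]
      have hdpos : 1 ≤ deg s x := Finset.card_pos.mpr ⟨e0, he0f⟩
      have h2 : deg s x + 1 ≤ (s.A x).card := hInv.2 x hxF
      have h3 : (s.A x).card - 1 ≤ (A' x).card := by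
        rw [hA']; dsimp only; rw [if_pos hadj]
        exact Finset.pred_card_le_card_erase
      omega
    · have h1 : (s.E.filter fun e => (e.1 = x ∨ e.2 = x) ∧ e.1 ∈ C.F.erase v0 ∧
          e.2 ∈ C.F.erase v0).card ≤ deg s x := by
        refine Finset.card_le_card ?_
        intro e he
        rw [Finset.mem_filter] at he
        exact Finset.mem_filter.mpr ⟨he.1, he.2.1⟩
      have h2 : deg s x + 1 ≤ (s.A x).card := hInv.2 x hxF
      have h3 : (A' x).card = (s.A x).card := by
        rw [hA']; dsimp only; rw [if_neg hadj]
      omega)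
  refine ⟨Function.update σ' v0 c0, ⟨?_, ?_⟩, Function.update_self _ _ _⟩
  · intro v hvF
    rcases eq_or_ne v v0 with rfl | hne
    · rwa [Function.update_self]
    · rw [Function.update_of_ne hne]
      exact hA'sub v (hσ'A v (Finset.mem_erase.mpr ⟨hne, hvF⟩))
  · intro e he
    obtain ⟨he1F, he2F, helt⟩ := hInv.1 e he
    have hne12 : e.1 ≠ e.2 := ne_of_lt helt
    by_cases h1 : e.1 = v0
    · have h2 : e.2 ≠ v0 := fun h => hne12 (h1.trans h.symm)
      rw [h1, Function.update_self, Function.update_of_ne h2]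
      have hadj : (v0, e.2) ∈ s.E ∨ (e.2, v0) ∈ s.E := by
        left
        have : (v0, e.2) = e := by rw [← h1]
        rwa [this]
      have := hσ'A e.2 (Finset.mem_erase.mpr ⟨h2, he2F⟩)
      rw [hA'] at this; dsimp only at this; rw [if_pos hadj] at this
      exact (Finset.ne_of_mem_erase this).symm
    · by_cases h2 : e.2 = v0
      · rw [h2, Function.update_self, Function.update_of_ne h1]
        have hadj : (v0, e.1) ∈ s.E ∨ (e.1, v0) ∈ s.E := by
          right
          have : (e.1, v0) = e := by rw [← h2]
          rwa [this]
        have := hσ'A e.1 (Finset.mem_erase.mpr ⟨h1, he1F⟩)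
        rw [hA'] at this; dsimp only at this; rw [if_pos hadj] at this
        exact Finset.ne_of_mem_erase this
      · rw [Function.update_of_ne h1, Function.update_of_ne h2]
        exact hσ'E e he (Finset.mem_erase.mpr ⟨h1, he1F⟩) (Finset.mem_erase.mpr ⟨h2, he2F⟩)


/-! ### State operations -/

def rmColor (s : St n d) (v : Fin n) (i : Fin d) : St n d :=
  ⟨Function.update s.A v ((s.A v).erase i), s.E⟩

def addEdge (s : St n d) (e : Fin n × Fin n) : St n d := ⟨s.A, insert e s.E⟩

def adjTo (s : St n d) (x v : Fin n) : Prop := (x, v) ∈ s.E ∨ (v, x) ∈ s.E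

noncomputable def finish (s : St n d) (x : Fin n) (c : Fin d) : St n d := by
  classical
  exact ⟨fun v => if v = x then {c} else if adjTo s x v then (s.A v).erase c else s.A v,
    s.E.filter fun e => ¬(e.1 = x ∨ e.2 = x)⟩

lemma phi_le_aux (C : Ctx n d) (s s' : St n d) (u w : Fin n) (a b : ℤ) (ha : 0 ≤ a)
    (hb : 0 ≤ b)
    (h : ∀ v ∈ C.F, tm s v ≤ tm s' v + (if v = u then a else 0) + (if v = w then b else 0)) :
    Phi C s ≤ Phi C s' + a + b := by
  classical
  unfold Phi
  calc ∑ v ∈ C.F, tm s v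
      ≤ ∑ v ∈ C.F, (tm s' v + (if v = u then a else 0) + (if v = w then b else 0)) :=
        Finset.sum_le_sum h
    _ = (∑ v ∈ C.F, tm s' v) + (∑ v ∈ C.F, if v = u then a else 0)
        + (∑ v ∈ C.F, if v = w then b else 0) := by
        rw [Finset.sum_add_distrib, Finset.sum_add_distrib]
    _ ≤ _ := by
        rw [Finset.sum_ite_eq' C.F u (fun _ => a), Finset.sum_ite_eq' C.F w (fun _ => b)]
        have h1 : (if u ∈ C.F then a else 0) ≤ a := by split_ifs <;> omega
        have h2 : (if w ∈ C.F then b else 0) ≤ b := by split_ifs <;> omega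
        omega

/-! rmColor lemmas -/

lemma rm_deg (s : St n d) (v : Fin n) (i : Fin d) (w : Fin n) :
    deg (rmColor s v i) w = deg s w := rfl

lemma rm_inv (C : Ctx n d) {s : St n d} (hInv : Inv C s) {v : Fin n} {i : Fin d}
    (hslack : deg s v + 2 ≤ (s.A v).card) : Inv C (rmColor s v i) := by
  refine ⟨hInv.1, ?_⟩
  intro w hw
  rw [rm_deg]
  rcases eq_or_ne w v with rfl | hne
  · have : (s.A w).card - 1 ≤ ((rmColor s w i).A w).card := by
      simp only [rmColor, Function.update_self]
      exact Finset.pred_card_le_card_erase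
    omega
  · have : (rmColor s v i).A w = s.A w := Function.update_of_ne hne _ _
    rw [this]
    exact hInv.2 w hw

lemma rm_col (C : Ctx n d) {s : St n d} {v : Fin n} {i : Fin d} (hv : v ∈ C.F) (σ : Fin n → Fin d)
    (h : Col C (rmColor s v i) σ) : Col C s σ ∧ σ v ≠ i := by
  have hσv := h.1 v hv
  simp only [rmColor, Function.update_self] at hσv
  refine ⟨⟨?_, h.2⟩, Finset.ne_of_mem_erase hσv⟩
  intro w hw
  rcases eq_or_ne w v with rfl | hne
  · exact Finset.mem_of_mem_erase hσv
  · have := h.1 w hw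
    rwa [show (rmColor s v i).A w = s.A w from Function.update_of_ne hne _ _] at this

lemma rm_phi (C : Ctx n d) (s : St n d) (v : Fin n) (i : Fin d) :
    Phi C s ≤ Phi C (rmColor s v i) + 1 := by
  have h := phi_le_aux C s (rmColor s v i) v v 1 0 (by norm_num) (le_refl 0) ?_
  · omega
  · intro w hw
    simp only [tm, rm_deg]
    rcases eq_or_ne w v with rfl | hne
    · have hAA : (rmColor s w i).A w = (s.A w).erase i := Function.update_self _ _ _
      rw [hAA, if_pos rfl]
      have h2 : (s.A w).card - 1 ≤ ((s.A w).erase i).card := Finset.pred_card_le_card_erase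
      omega
    · rw [show (rmColor s v i).A w = s.A w from Function.update_of_ne hne _ _,
        if_neg hne]
      omega

/-! addEdge lemmas -/

lemma add_deg_le (s : St n d) (e : Fin n × Fin n) (v : Fin n) :
    deg (addEdge s e) v ≤ deg s v + 1 := by
  classical
  simp only [deg, addEdge, Finset.filter_insert]
  split
  · exact le_trans (Finset.card_insert_le _ _) (by omega)
  · omega

lemma add_deg_other (s : St n d) (e : Fin n × Fin n) (v : Fin n)
    (h : ¬(e.1 = v ∨ e.2 = v)) : deg (addEdge s e) v = deg s v := by
  classical
  simp only [deg, addEdge, Finset.filter_insert, if_neg h]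

lemma add_inv (C : Ctx n d) {s : St n d} (hInv : Inv C s) {x y : Fin n} (hx : x ∈ C.F)
    (hy : y ∈ C.F) (hlt : x < y) (hsx : deg s x + 2 ≤ (s.A x).card)
    (hsy : deg s y + 2 ≤ (s.A y).card) : Inv C (addEdge s (x, y)) := by
  constructor
  · intro e he
    rcases Finset.mem_insert.mp he with rfl | he
    · exact ⟨hx, hy, hlt⟩
    · exact hInv.1 e he
  · intro v hv
    have hd := add_deg_le s (x, y) v
    have hA : (addEdge s (x, y)).A v = s.A v := rfl
    rw [hA]
    by_cases h : (x, y).1 = v ∨ (x, y).2 = v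
    · rcases h with h | h <;> simp only at h <;> subst h <;> omega
    · rw [add_deg_other s _ v h]
      exact hInv.2 v hv

lemma add_col (C : Ctx n d) {s : St n d} {x y : Fin n} (σ : Fin n → Fin d)
    (h : Col C (addEdge s (x, y)) σ) : Col C s σ ∧ σ x ≠ σ y := by
  refine ⟨⟨h.1, fun e he => h.2 e (Finset.mem_insert_of_mem he)⟩, ?_⟩
  exact h.2 (x, y) (Finset.mem_insert_self _ _)

lemma add_phi (C : Ctx n d) (s : St n d) (x y : Fin n) :
    Phi C s ≤ Phi C (addEdge s (x, y)) + 2 := by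
  have h := phi_le_aux C s (addEdge s (x, y)) x y 1 1 (by norm_num) (by norm_num) ?_
  · omega
  · intro v hv
    have hA : (addEdge s (x, y)).A v = s.A v := rfl
    simp only [tm, hA]
    by_cases h : (x, y).1 = v ∨ (x, y).2 = v
    · have hd := add_deg_le s (x, y) v
      rcases h with h | h
      · simp only at h; subst h; rw [if_pos rfl]
        split_ifs <;> omega
      · simp only at h; subst h; rw [if_pos rfl]
        split_ifs <;> omega
    · rw [add_deg_other s _ v h]
      push_neg at h
      simp only at h
      rw [if_neg (fun hh => h.1 hh.symm), if_neg (fun hh => h.2 hh.symm)]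
      omega

/-! finish lemmas -/

lemma fin_A_x (s : St n d) (x : Fin n) (c : Fin d) : (finish s x c).A x = {c} := by
  simp [finish]

lemma fin_A_adj (s : St n d) (x : Fin n) (c : Fin d) {v : Fin n} (hne : v ≠ x)
    (hadj : adjTo s x v) : (finish s x c).A v = (s.A v).erase c := by
  simp [finish, hne, hadj]

lemma fin_A_nadj (s : St n d) (x : Fin n) (c : Fin d) {v : Fin n} (hne : v ≠ x)
    (hnadj : ¬ adjTo s x v) : (finish s x c).A v = s.A v := by
  simp [finish, hne, hnadj]

lemma fin_A_sub (s : St n d) (x : Fin n) (c : Fin d) {v : Fin n} (hne : v ≠ x) :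
    (finish s x c).A v ⊆ s.A v := by
  by_cases hadj : adjTo s x v
  · rw [fin_A_adj s x c hne hadj]; exact Finset.erase_subset _ _
  · rw [fin_A_nadj s x c hne hadj]

lemma fin_deg_x (s : St n d) (x : Fin n) (c : Fin d) : deg (finish s x c) x = 0 := by
  classical
  simp only [deg, finish, Finset.filter_filter]
  rw [Finset.filter_false_of_mem]
  · exact Finset.card_empty
  · intro e _
    tauto

lemma fin_deg_le (s : St n d) (x : Fin n) (c : Fin d) (v : Fin n) :
    deg (finish s x c) v ≤ deg s v := by
  classical
  apply Finset.card_le_card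
  intro e he
  simp only [finish, Finset.mem_filter] at he ⊢
  exact ⟨he.1.1, he.2⟩

lemma fin_deg_adj (C : Ctx n d) {s : St n d} (hwf : Wf C s) (x : Fin n) (c : Fin d) {v : Fin n}
    (hadj : adjTo s x v) : deg (finish s x c) v + 1 ≤ deg s v := by
  classical
  obtain ⟨e0, he0E, he0x, he0v⟩ : ∃ e0 ∈ s.E, (e0.1 = x ∨ e0.2 = x) ∧ (e0.1 = v ∨ e0.2 = v) := by
    rcases hadj with h | h
    · exact ⟨(x, v), h, Or.inl rfl, Or.inr rfl⟩
    · exact ⟨(v, x), h, Or.inr rfl, Or.inl rfl⟩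
  have he0f : e0 ∈ s.E.filter (fun e => e.1 = v ∨ e.2 = v) := Finset.mem_filter.mpr ⟨he0E, he0v⟩
  have hsub : (finish s x c).E.filter (fun e => e.1 = v ∨ e.2 = v) ⊆
      (s.E.filter (fun e => e.1 = v ∨ e.2 = v)).erase e0 := by
    intro e he
    rw [Finset.mem_filter] at he
    have he' := he.1
    simp only [finish, Finset.mem_filter] at he'
    refine Finset.mem_erase.mpr ⟨?_, Finset.mem_filter.mpr ⟨he'.1, he.2⟩⟩
    intro hee
    subst hee
    exact he'.2 he0x
  have h1 := Finset.card_le_card hsub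
  rw [Finset.card_erase_of_mem he0f] at h1
  have h2 : 1 ≤ deg s v := Finset.card_pos.mpr ⟨e0, he0f⟩
  simp only [deg] at *
  omega

lemma fin_deg_nadj (C : Ctx n d) {s : St n d} (hwf : Wf C s) {x : Fin n} (c : Fin d) {v : Fin n}
    (hne : v ≠ x) (hnadj : ¬ adjTo s x v) : deg (finish s x c) v = deg s v := by
  classical
  simp only [deg]
  congr 1
  ext e
  simp only [finish, Finset.mem_filter]
  constructor
  · rintro ⟨⟨he, _⟩, ht⟩
    exact ⟨he, ht⟩
  · rintro ⟨he, ht⟩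
    refine ⟨⟨he, ?_⟩, ht⟩
    intro hx
    -- e touches both x and v : it is (x, v) or (v, x), contradicting ¬adjTo
    have hne12 : e.1 ≠ e.2 := wf_ne C hwf he
    rcases hx with hx | hx <;> rcases ht with ht | ht
    · exact hne (ht.symm.trans hx)
    · exact hnadj (Or.inl (by rw [← hx, ← ht]; exact he))
    · exact hnadj (Or.inr (by rw [← ht, ← hx]; exact he))
    · exact hne (ht.symm.trans hx)

lemma fin_inv (C : Ctx n d) {s : St n d} (hInv : Inv C s) {x : Fin n} {c : Fin d} :
    Inv C (finish s x c) := by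
  constructor
  · intro e he
    have : e ∈ s.E := by
      simp only [finish, Finset.mem_filter] at he
      exact he.1
    exact hInv.1 e this
  · intro v hv
    rcases eq_or_ne v x with rfl | hne
    · rw [fin_deg_x, fin_A_x]
      simp
    · by_cases hadj : adjTo s x v
      · rw [fin_A_adj s x c hne hadj]
        have h1 := fin_deg_adj C hInv.1 x c hadj
        have h2 := hInv.2 v hv
        have h3 : (s.A v).card - 1 ≤ ((s.A v).erase c).card := Finset.pred_card_le_card_erase
        omega
      · rw [fin_A_nadj s x c hne hadj, fin_deg_nadj C hInv.1 c hne hadj]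
        exact hInv.2 v hv

lemma fin_col (C : Ctx n d) {s : St n d} (hInv : Inv C s) {x : Fin n} {c : Fin d} (hx : x ∈ C.F)
    (hc : c ∈ s.A x) (σ : Fin n → Fin d) (h : Col C (finish s x c) σ) :
    Col C s σ ∧ σ x = c := by
  have hσx : σ x = c := by
    have := h.1 x hx
    rw [fin_A_x] at this
    exact Finset.mem_singleton.mp this
  refine ⟨⟨?_, ?_⟩, hσx⟩
  · intro v hv
    rcases eq_or_ne v x with rfl | hne
    · rw [hσx]; exact hc
    · exact fin_A_sub s x c hne (h.1 v hv)
  · intro e he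
    by_cases ht : e.1 = x ∨ e.2 = x
    · have hne12 : e.1 ≠ e.2 := wf_ne C hInv.1 he
      rcases ht with ht | ht
      · have h2x : e.2 ≠ x := fun hh => hne12 (ht.trans hh.symm)
        have hadj : adjTo s x e.2 := Or.inl (by rw [← ht]; exact he)
        have := h.1 e.2 ((hInv.1 e he).2.1)
        rw [fin_A_adj s x c h2x hadj] at this
        rw [ht, hσx]
        exact (Finset.ne_of_mem_erase this).symm
      · have h1x : e.1 ≠ x := fun hh => hne12 (hh.trans ht.symm)
        have hadj : adjTo s x e.1 := Or.inr (by rw [← ht]; exact he)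
        have := h.1 e.1 ((hInv.1 e he).1)
        rw [fin_A_adj s x c h1x hadj] at this
        rw [ht, hσx]
        exact Finset.ne_of_mem_erase this
    · exact h.2 e (by simp only [finish, Finset.mem_filter]; exact ⟨he, ht⟩)

lemma fin_phi (C : Ctx n d) {s : St n d} (hInv : Inv C s) {x : Fin n} {c : Fin d}
    (htight : (s.A x).card = deg s x + 1) : Phi C s ≤ Phi C (finish s x c) := by
  apply Finset.sum_le_sum
  intro v hv
  simp only [tm]
  rcases eq_or_ne v x with rfl | hne
  · rw [fin_deg_x, fin_A_x, htight]
    simp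
  · by_cases hadj : adjTo s x v
    · rw [fin_A_adj s x c hne hadj]
      have h1 := fin_deg_adj C hInv.1 x c hadj
      have h3 : (s.A v).card - 1 ≤ ((s.A v).erase c).card := Finset.pred_card_le_card_erase
      have h4 : 1 ≤ deg s v := by
        rcases hadj with h | h
        · exact Finset.card_pos.mpr ⟨(x, v), Finset.mem_filter.mpr ⟨h, Or.inr rfl⟩⟩
        · exact Finset.card_pos.mpr ⟨(v, x), Finset.mem_filter.mpr ⟨h, Or.inl rfl⟩⟩
      omega
    · rw [fin_A_nadj s x c hne hadj, fin_deg_nadj C hInv.1 c hne hadj]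

lemma not_adj_of_lt (C : Ctx n d) {s : St n d} (hwf : Wf C s) {x y : Fin n} (hlt : x < y)
    (hE : (x, y) ∉ s.E) : ¬ adjTo s x y := by
  rintro (h | h)
  · exact hE h
  · exact absurd (hwf (y, x) h).2.2 (not_lt.mpr (le_of_lt hlt))


/-! ### Anc evaluation lemmas -/

lemma anc_head_iff (C : Ctx n d) (σ : Fin n → Fin d) (i : Fin d) {y : Fin n} (hy : y ∈ C.F) :
    Anc C σ (C.head i) y ↔ σ y = i := by
  constructor
  · rintro (h | h | ⟨_, h | ⟨hF, _⟩⟩)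
    · exact absurd (h ▸ C.head_mem i) C.r_not_H
    · exact absurd hy (C.disj y (h ▸ C.head_mem i))
    · exact (C.head_inj h).symm
    · exact absurd hF (C.disj _ (C.head_mem i))
  · intro h
    exact Or.inr (Or.inr ⟨hy, Or.inl (by rw [h])⟩)

lemma anc_ff_iff (C : Ctx n d) (σ : Fin n → Fin d) {x y : Fin n} (hx : x ∈ C.F) (hy : y ∈ C.F)
    (hxy : x ≠ y) : Anc C σ x y ↔ (σ x = σ y ∧ x < y) := by
  constructor
  · rintro (h | h | ⟨_, h | ⟨_, h1, h2⟩⟩)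
    · exact absurd (h ▸ hx) C.r_not_F
    · exact absurd h hxy
    · exact absurd hx (C.disj x (h ▸ C.head_mem (σ y)))
    · exact ⟨h1, h2⟩
  · rintro ⟨h1, h2⟩
    exact Or.inr (Or.inr ⟨hy, Or.inr ⟨hx, h1, h2⟩⟩)

lemma anc_not_y_r (C : Ctx n d) (σ : Fin n → Fin d) {x : Fin n} (hx : x ≠ C.r) :
    ¬ Anc C σ x C.r := by
  rintro (h | h | ⟨hF, _⟩)
  · exact hx h
  · exact hx h
  · exact C.r_not_F hF

lemma anc_not_yH (C : Ctx n d) (σ : Fin n → Fin d) {x y : Fin n} (hy : y ∈ C.H) (hx1 : x ≠ C.r)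
    (hx2 : x ≠ y) : ¬ Anc C σ x y := by
  rintro (h | h | ⟨hF, _⟩)
  · exact hx1 h
  · exact hx2 h
  · exact C.disj y hy hF

/-! ### The main induction -/

lemma main_ind (C : Ctx n d) (T : DTree (Fin n) (Fin n → Fin n)) :
    ∀ s : St n d, Inv C s →
      (∀ σ, Col C s σ → T.run (pathOracle (pmap C σ)) = pmap C σ) →
      Phi C s ≤ 2 * (T.depth : ℤ) := by
  induction T with
  | leaf o =>
    intro s hInv hcorr
    have hdep : ((DTree.leaf o : DTree (Fin n) (Fin n → Fin n)).depth : ℤ) = 0 := rfl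
    rw [hdep]
    norm_num
    by_contra hpos
    push_neg at hpos
    have hex : ∃ v ∈ C.F, deg s v + 2 ≤ (s.A v).card := by
      by_contra hall
      push_neg at hall
      have hterm : ∀ v ∈ C.F, tm s v ≤ 0 := by
        intro v hv
        have h1 := hall v hv
        simp only [tm]
        omega
      have := Finset.sum_nonpos hterm
      unfold Phi at hpos
      omega
    obtain ⟨v0, hv0, hslack⟩ := hex
    obtain ⟨c0, hc0, c1, hc1, hne01⟩ := Finset.one_lt_card.mp
      (show 1 < (s.A v0).card by omega)
    obtain ⟨σ0, hσ0, hv00⟩ := ext_coloring C s hInv hv0 hc0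
    obtain ⟨σ1, hσ1, hv01⟩ := ext_coloring C s hInv hv0 hc1
    have e0 := hcorr σ0 hσ0
    have e1 := hcorr σ1 hσ1
    rw [DTree.run] at e0 e1
    have heq : pmap C σ0 = pmap C σ1 := by rw [← e0, ← e1]
    have := pmap_determines C σ0 σ1 hv0 heq
    rw [hv00, hv01] at this
    exact hne01 this
  | node q t f iht ihf =>
    intro s hInv hcorr
    obtain ⟨x, y⟩ := q
    have hdepth : (((DTree.node (x, y) t f).depth : ℕ) : ℤ) =
        1 + max (t.depth : ℤ) (f.depth : ℤ) := by
      show ((1 + max t.depth f.depth : ℕ) : ℤ) = _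
      push_cast [Nat.cast_max]
      ring
    have STEP : ∀ (b : Bool) (s' : St n d), Inv C s' → (∀ σ, Col C s' σ → Col C s σ) →
        (∀ σ, Col C s' σ → pathOracle (pmap C σ) (x, y) = b) → Phi C s ≤ Phi C s' + 2 →
        Phi C s ≤ 2 * (((DTree.node (x, y) t f).depth : ℕ) : ℤ) := by
      intro b s' hInv' hsub horacle hphi
      have hcorr' : ∀ σ, Col C s' σ →
          (if b then t else f).run (pathOracle (pmap C σ)) = pmap C σ := by
        intro σ hσ
        have hr := hcorr σ (hsub σ hσ)
        rw [DTree.run, horacle σ hσ] at hr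
        cases b
        · simpa using hr
        · simpa using hr
      have hrec : Phi C s' ≤ 2 * ((if b then t else f).depth : ℤ) := by
        cases b
        · exact ihf s' hInv' (by simpa using hcorr')
        · exact iht s' hInv' (by simpa using hcorr')
      have hmax : ((if b then t else f).depth : ℤ) ≤ max (t.depth : ℤ) (f.depth : ℤ) := by
        cases b
        · simpa using le_max_right (t.depth : ℤ) (f.depth : ℤ)
        · simpa using le_max_left (t.depth : ℤ) (f.depth : ℤ)
      rw [hdepth]
      linarith
    rcases eq_or_ne x C.r with rfl | hxr
    · exact STEP true s hInv (fun _ h => h)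
        (fun σ _ => (oracle_true C σ _).mpr (Or.inl rfl)) (by omega)
    rcases eq_or_ne x y with rfl | hxy
    · exact STEP true s hInv (fun _ h => h)
        (fun σ _ => (oracle_true C σ _).mpr (Or.inr (Or.inl rfl))) (by omega)
    rcases eq_or_ne y C.r with rfl | hyr
    · exact STEP false s hInv (fun _ h => h)
        (fun σ _ => (oracle_false C σ _).mpr (anc_not_y_r C σ hxr)) (by omega)
    rcases C.tri y with h | hyH | hyF
    · exact absurd h hyr
    · exact STEP false s hInv (fun _ h => h)
        (fun σ _ => (oracle_false C σ _).mpr (anc_not_yH C σ hyH hxr hxy)) (by omega)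
    rcases C.tri x with h | hxH | hxF
    · exact absurd h hxr
    · -- head query (x = C.head i, y free)
      obtain ⟨i, hi⟩ := C.head_surj x hxH
      subst hi
      by_cases hiA : i ∈ s.A y
      · by_cases hsing : s.A y = {i}
        · refine STEP true s hInv (fun _ h => h)
            (fun σ hσ => (oracle_true C σ _).mpr ?_) (by omega)
          have hmem := hσ.1 y hyF
          rw [hsing, Finset.mem_singleton] at hmem
          exact (anc_head_iff C σ i hyF).mpr hmem
        · by_cases htight : (s.A y).card = deg s y + 1
          · have h2 : 2 ≤ (s.A y).card := by
              have h1 : 1 ≤ (s.A y).card := Finset.card_pos.mpr ⟨i, hiA⟩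
              rcases eq_or_lt_of_le h1 with h1' | h1'
              · obtain ⟨a, ha⟩ := Finset.card_eq_one.mp h1'.symm
                rw [ha, Finset.mem_singleton] at hiA
                exact absurd (by rw [ha, hiA]) hsing
              · omega
            have hne : ((s.A y).erase i).Nonempty := by
              rw [← Finset.card_pos, Finset.card_erase_of_mem hiA]; omega
            obtain ⟨c, hc⟩ := hne
            have hcA : c ∈ s.A y := Finset.mem_of_mem_erase hc
            have hci : c ≠ i := Finset.ne_of_mem_erase hc
            refine STEP false (finish s y c) (fin_inv C hInv)
              (fun σ hσ => (fin_col C hInv hyF hcA σ hσ).1)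
              (fun σ hσ => (oracle_false C σ _).mpr ?_)
              (le_trans (fin_phi C hInv htight (x := y) (c := c)) (by omega))
            have hσy := (fin_col C hInv hyF hcA σ hσ).2
            rw [anc_head_iff C σ i hyF]
            exact fun heq => hci (hσy.symm.trans heq)
          · have hslack : deg s y + 2 ≤ (s.A y).card := by
              have := hInv.2 y hyF; omega
            refine STEP false (rmColor s y i) (rm_inv C hInv hslack)
              (fun σ hσ => (rm_col C hyF σ hσ).1)
              (fun σ hσ => (oracle_false C σ _).mpr ?_)
              (le_trans (rm_phi C s y i) (by omega))
            rw [anc_head_iff C σ i hyF]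
            exact (rm_col C hyF σ hσ).2
      · refine STEP false s hInv (fun _ h => h)
          (fun σ hσ => (oracle_false C σ _).mpr ?_) (by omega)
        rw [anc_head_iff C σ i hyF]
        exact fun h => hiA (h ▸ hσ.1 y hyF)
    · -- free-free query
      by_cases hlt : x < y
      · by_cases hE : (x, y) ∈ s.E
        · refine STEP false s hInv (fun _ h => h)
            (fun σ hσ => (oracle_false C σ _).mpr ?_) (by omega)
          rw [anc_ff_iff C σ hxF hyF hxy]
          exact fun h => hσ.2 (x, y) hE h.1
        · have hnadj : ¬ adjTo s x y := not_adj_of_lt C hInv.1 hlt hE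
          by_cases hcommon : ∃ c, c ∈ s.A x ∧ c ∈ s.A y
          · obtain ⟨cc, hccx, hccy⟩ := hcommon
            by_cases hsing : s.A x = s.A y ∧ (s.A x).card = 1
            · refine STEP true s hInv (fun _ h => h)
                (fun σ hσ => (oracle_true C σ _).mpr ?_) (by omega)
              rw [anc_ff_iff C σ hxF hyF hxy]
              obtain ⟨a, ha⟩ := Finset.card_eq_one.mp hsing.2
              have h1 := hσ.1 x hxF
              have h2 := hσ.1 y hyF
              rw [ha, Finset.mem_singleton] at h1
              rw [← hsing.1, ha, Finset.mem_singleton] at h2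
              exact ⟨h1.trans h2.symm, hlt⟩
            · by_cases htx : (s.A x).card = deg s x + 1
              · -- x tight
                by_cases hex : ∃ c ∈ s.A x, c ∉ s.A y
                · obtain ⟨c, hcx, hcy⟩ := hex
                  refine STEP false (finish s x c) (fin_inv C hInv)
                    (fun σ hσ => (fin_col C hInv hxF hcx σ hσ).1)
                    (fun σ hσ => (oracle_false C σ _).mpr ?_)
                    (le_trans (fin_phi C hInv htx (x := x) (c := c)) (by omega))
                  rw [anc_ff_iff C σ hxF hyF hxy]
                  rintro ⟨h1, _⟩
                  have hσx := (fin_col C hInv hxF hcx σ hσ).2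
                  have hσyA : σ y ∈ s.A y := ((fin_col C hInv hxF hcx σ hσ).1).1 y hyF
                  rw [← h1, hσx] at hσyA
                  exact hcy hσyA
                · push_neg at hex
                  have hAxne : (s.A x).Nonempty := ⟨cc, hccx⟩
                  obtain ⟨c, hcx⟩ := hAxne
                  have hcy : c ∈ s.A y := hex c hcx
                  have hfinInv := fin_inv C hInv (x := x) (c := c)
                  have hAy2 : (finish s x c).A y = s.A y :=
                    fin_A_nadj s x c (Ne.symm hxy) hnadj
                  have hdy2 : deg (finish s x c) y = deg s y :=
                    fin_deg_nadj C hInv.1 c (Ne.symm hxy) hnadj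
                  by_cases hty : (s.A y).card = deg s y + 1
                  · -- both tight : finish x with c, then finish y with c' ≠ c
                    have hAyne : ((s.A y).erase c).Nonempty := by
                      rw [← Finset.card_pos, Finset.card_erase_of_mem hcy]
                      by_contra hcon
                      have h1 : (s.A y).card = 1 := by
                        have := Finset.card_pos.mpr ⟨c, hcy⟩
                        omega
                      obtain ⟨a, ha⟩ := Finset.card_eq_one.mp h1
                      have hca : c = a := by
                        rw [ha, Finset.mem_singleton] at hcy; exact hcy
                      have hAx : s.A x = {a} := by
                        rcases Finset.subset_singleton_iff.mp
                          (fun z hz => by rw [← ha ]; exact hex z hz) with h' | h'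
                        · exact absurd h' (Finset.nonempty_iff_ne_empty.mp ⟨c, hcx⟩)
                        · exact h'
                      exact hsing ⟨by rw [hAx, ha], by rw [hAx]; exact Finset.card_singleton a⟩
                    obtain ⟨c', hc'⟩ := hAyne
                    have hc'A : c' ∈ s.A y := Finset.mem_of_mem_erase hc'
                    have hc'c : c' ≠ c := Finset.ne_of_mem_erase hc'
                    have hty2 : ((finish s x c).A y).card = deg (finish s x c) y + 1 := by
                      rw [hAy2, hdy2]; exact hty
                    have hc'A2 : c' ∈ (finish s x c).A y := by rw [hAy2]; exact hc'A
                    refine STEP false (finish (finish s x c) y c') (fin_inv C hfinInv)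
                      (fun σ hσ =>
                        (fin_col C hInv hxF hcx σ
                          ((fin_col C hfinInv hyF hc'A2 σ hσ).1)).1)
                      (fun σ hσ => (oracle_false C σ _).mpr ?_)
                      (le_trans (fin_phi C hInv htx (x := x) (c := c))
                        (le_trans (fin_phi C hfinInv hty2 (x := y) (c := c')) (by omega)))
                    rw [anc_ff_iff C σ hxF hyF hxy]
                    rintro ⟨h1, _⟩
                    have hσy := (fin_col C hfinInv hyF hc'A2 σ hσ).2
                    have hσx := (fin_col C hInv hxF hcx σ
                      ((fin_col C hfinInv hyF hc'A2 σ hσ).1)).2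
                    exact hc'c (hσy.symm.trans (h1.symm.trans hσx))
                  · -- x tight, y not tight : finish x with c, remove c from A y
                    have hslacky : deg (finish s x c) y + 2 ≤ ((finish s x c).A y).card := by
                      rw [hAy2, hdy2]
                      have := hInv.2 y hyF; omega
                    refine STEP false (rmColor (finish s x c) y c)
                      (rm_inv C hfinInv hslacky)
                      (fun σ hσ =>
                        (fin_col C hInv hxF hcx σ ((rm_col C hyF σ hσ).1)).1)
                      (fun σ hσ => (oracle_false C σ _).mpr ?_)
                      (le_trans (fin_phi C hInv htx (x := x) (c := c))
                        (le_trans (rm_phi C (finish s x c) y c) (by omega)))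
                    rw [anc_ff_iff C σ hxF hyF hxy]
                    rintro ⟨h1, _⟩
                    have hσyc := (rm_col C hyF σ hσ).2
                    have hσx := (fin_col C hInv hxF hcx σ ((rm_col C hyF σ hσ).1)).2
                    exact hσyc (h1.symm.trans hσx)
              · by_cases hty : (s.A y).card = deg s y + 1
                · -- y tight, x not tight
                  have hnadj2 : ¬ adjTo s y x := by
                    rintro (h | h)
                    · exact absurd (hInv.1 (y, x) h).2.2 (not_lt.mpr (le_of_lt hlt))
                    · exact hE h
                  by_cases hex : ∃ c ∈ s.A y, c ∉ s.A x
                  · obtain ⟨c, hcy, hcx⟩ := hex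
                    refine STEP false (finish s y c) (fin_inv C hInv)
                      (fun σ hσ => (fin_col C hInv hyF hcy σ hσ).1)
                      (fun σ hσ => (oracle_false C σ _).mpr ?_)
                      (le_trans (fin_phi C hInv hty (x := y) (c := c)) (by omega))
                    rw [anc_ff_iff C σ hxF hyF hxy]
                    rintro ⟨h1, _⟩
                    have hσy := (fin_col C hInv hyF hcy σ hσ).2
                    have hσxA : σ x ∈ s.A x := ((fin_col C hInv hyF hcy σ hσ).1).1 x hxF
                    rw [h1, hσy] at hσxA
                    exact hcx hσxA
                  · push_neg at hex
                    have hAyne : (s.A y).Nonempty := ⟨cc, hccy⟩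
                    obtain ⟨c, hcy⟩ := hAyne
                    have hcx : c ∈ s.A x := hex c hcy
                    have hfinInv := fin_inv C hInv (x := y) (c := c)
                    have hAx2 : (finish s y c).A x = s.A x := fin_A_nadj s y c hxy hnadj2
                    have hdx2 : deg (finish s y c) x = deg s x :=
                      fin_deg_nadj C hInv.1 c hxy hnadj2
                    have hslackx : deg (finish s y c) x + 2 ≤ ((finish s y c).A x).card := by
                      rw [hAx2, hdx2]
                      have := hInv.2 x hxF; omega
                    refine STEP false (rmColor (finish s y c) x c)
                      (rm_inv C hfinInv hslackx)
                      (fun σ hσ =>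
                        (fin_col C hInv hyF hcy σ ((rm_col C hxF σ hσ).1)).1)
                      (fun σ hσ => (oracle_false C σ _).mpr ?_)
                      (le_trans (fin_phi C hInv hty (x := y) (c := c))
                        (le_trans (rm_phi C (finish s y c) x c) (by omega)))
                    rw [anc_ff_iff C σ hxF hyF hxy]
                    rintro ⟨h1, _⟩
                    have hσxc := (rm_col C hxF σ hσ).2
                    have hσy := (fin_col C hInv hyF hcy σ ((rm_col C hxF σ hσ).1)).2
                    exact hσxc (h1.trans hσy)
                · -- neither tight : add edge
                  have hsx : deg s x + 2 ≤ (s.A x).card := by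
                    have := hInv.2 x hxF; omega
                  have hsy : deg s y + 2 ≤ (s.A y).card := by
                    have := hInv.2 y hyF; omega
                  refine STEP false (addEdge s (x, y))
                    (add_inv C hInv hxF hyF hlt hsx hsy)
                    (fun σ hσ => (add_col C σ hσ).1)
                    (fun σ hσ => (oracle_false C σ _).mpr ?_)
                    (add_phi C s x y)
                  rw [anc_ff_iff C σ hxF hyF hxy]
                  exact fun h => (add_col C σ hσ).2 h.1
          · refine STEP false s hInv (fun _ h => h)
              (fun σ hσ => (oracle_false C σ _).mpr ?_) (by omega)
            push_neg at hcommon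
            rw [anc_ff_iff C σ hxF hyF hxy]
            rintro ⟨h1, _⟩
            exact hcommon (σ x) (hσ.1 x hxF) (h1 ▸ hσ.1 y hyF)
      · refine STEP false s hInv (fun _ h => h)
          (fun σ hσ => (oracle_false C σ _).mpr ?_) (by omega)
        rw [anc_ff_iff C σ hxF hyF hxy]
        exact fun h => hlt h.2


/-! ### Final assembly -/

theorem final :
    ∃ c : ℝ, 0 < c ∧ ∀ d n : ℕ, 2 ≤ d → 2 * d ≤ n →
      ∀ (r : Fin n) (T : DTree (Fin n) (Fin n → Fin n)),
        (∀ p : Fin n → Fin n, IsBroom p r d → T.run (pathOracle p) = p) →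
        (1/16 : ℝ) * ((d : ℝ) * (n : ℝ)) ≤ (T.depth : ℝ) := by
  classical
  refine ⟨1/16, by norm_num, ?_⟩
  intro d n hd hn r T hcorr
  have hdpos : 0 < d := by omega
  have hn4 : 4 ≤ n := by omega
  have hcard_erase : (Finset.univ.erase r).card = n - 1 := by
    rw [Finset.card_erase_of_mem (Finset.mem_univ r), Finset.card_univ, Fintype.card_fin]
  have hdle : d ≤ (Finset.univ.erase r).card := by omega
  obtain ⟨H, hHsub, hHcard⟩ := Finset.exists_subset_card_eq hdle
  set F : Finset (Fin n) := (Finset.univ.erase r) \ H with hFdef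
  have hFcard : F.card = n - 1 - d := by
    rw [hFdef, Finset.card_sdiff_of_subset hHsub, hcard_erase, hHcard]
  have hrH : r ∉ H := fun h => (Finset.mem_erase.mp (hHsub h)).1 rfl
  have hrF : r ∉ F := fun h => (Finset.mem_erase.mp (Finset.mem_sdiff.mp h).1).1 rfl
  set e : Fin d ≃o {x // x ∈ H} := H.orderIsoOfFin hHcard with hedef
  set C : Ctx n d :=
    { r := r
      H := H
      F := F
      head := fun i => (e i : Fin n)
      head_mem := fun i => (e i).2
      head_inj := fun a b hab => e.injective (Subtype.ext hab)
      head_surj := fun h hh => ⟨e.symm ⟨h, hh⟩, by simp⟩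
      r_not_H := hrH
      r_not_F := hrF
      disj := fun v hH hF => (Finset.mem_sdiff.mp hF).2 hH
      tri := by
        intro v
        rcases eq_or_ne v r with rfl | hv
        · exact Or.inl rfl
        · by_cases hH : v ∈ H
          · exact Or.inr (Or.inl hH)
          · exact Or.inr (Or.inr (Finset.mem_sdiff.mpr
              ⟨Finset.mem_erase.mpr ⟨hv, Finset.mem_univ v⟩, hH⟩))
      card_H := hHcard
      dpos := hdpos } with hCdef
  set s0 : St n d := ⟨fun _ => Finset.univ, ∅⟩ with hs0def
  have hdeg0 : ∀ v, deg s0 v = 0 := by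
    intro v
    show (Finset.filter _ (∅ : Finset (Fin n × Fin n))).card = 0
    simp
  have hInv0 : Inv C s0 := by
    constructor
    · intro t ht
      exact absurd ht (Finset.notMem_empty t)
    · intro v _
      rw [hdeg0 v]
      have : (Finset.univ : Finset (Fin d)).card = d := by
        rw [Finset.card_univ, Fintype.card_fin]
      simp only [hs0def]
      omega
  have hcol0 : ∀ σ : Fin n → Fin d, Col C s0 σ := by
    intro σ
    exact ⟨fun v _ => Finset.mem_univ _, fun t ht => absurd ht (Finset.notMem_empty t)⟩
  have hmain := main_ind C T s0 hInv0 (fun σ _ => hcorr (pmap C σ) (broom C σ))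
  have hphi0 : Phi C s0 = (F.card : ℤ) * ((d : ℤ) - 1) := by
    unfold Phi
    have htm : ∀ v ∈ C.F, tm s0 v = (d : ℤ) - 1 := by
      intro v _
      simp only [tm, hdeg0 v]
      have h1 : ((Finset.univ : Finset (Fin d)).card : ℤ) = d := by
        rw [Finset.card_univ, Fintype.card_fin]
      have h2 : ((s0.A v).card : ℤ) = d := h1
      omega
    rw [Finset.sum_congr rfl htm, Finset.sum_const, nsmul_eq_mul]
  have hCF : C.F = F := rfl
  rw [hphi0] at hmain
  -- now hmain : (F.card : ℤ) * (d - 1) ≤ 2 * T.depth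
  have hNat : d * n ≤ 8 * ((n - 1 - d) * (d - 1)) := by
    have h1 : n ≤ 4 * (n - 1 - d) := by omega
    have h2 : d ≤ 2 * (d - 1) := by omega
    calc d * n ≤ (2 * (d - 1)) * (4 * (n - 1 - d)) := Nat.mul_le_mul h2 h1
      _ = 8 * ((n - 1 - d) * (d - 1)) := by ring
  have hR1 : ((n - 1 - d : ℕ) : ℝ) * ((d : ℝ) - 1) ≤ 2 * (T.depth : ℝ) := by
    have := hmain
    rw [hFcard] at this
    exact_mod_cast this
  have hR2 : (d : ℝ) * (n : ℝ) ≤ 8 * (((n - 1 - d : ℕ) : ℝ) * ((d : ℝ) - 1)) := by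
    have hcast : ((d - 1 : ℕ) : ℝ) = (d : ℝ) - 1 := by
      have : (1 : ℕ) ≤ d := by omega
      push_cast [Nat.cast_sub this]
      ring
    calc (d : ℝ) * (n : ℝ) = ((d * n : ℕ) : ℝ) := by push_cast; ring
      _ ≤ ((8 * ((n - 1 - d) * (d - 1)) : ℕ) : ℝ) := by exact_mod_cast hNat
      _ = 8 * (((n - 1 - d : ℕ) : ℝ) * (((d - 1 : ℕ)) : ℝ)) := by push_cast; ring
      _ = 8 * (((n - 1 - d : ℕ) : ℝ) * ((d : ℝ) - 1)) := by rw [hcast]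
  linarith

end PQLB


/-- Any deterministic algorithm reconstructing arbitrary `n`-node rooted trees of maximum
degree `d` from path queries needs `Ω(dn)` queries in the worst case: already on the family
of broom trees, any correct decision tree has depth at least `c·d·n`. -/
theorem path_query_lower_bound_dn :
    ∃ c : ℝ, 0 < c ∧ ∀ d n : ℕ, 2 ≤ d → 2 * d ≤ n →
      ∀ (r : Fin n) (T : DTree (Fin n) (Fin n → Fin n)),
        (∀ p : Fin n → Fin n, IsBroom p r d → T.run (pathOracle p) = p) →
        c * ((d : ℝ) * (n : ℝ)) ≤ (T.depth : ℝ) := by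
  obtain ⟨_, _, h⟩ := PQLB.final
  exact ⟨1/16, by norm_num, h⟩
end
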